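/- arXiv:1704.02660 — 9 statements merged into one kernel-verified Lean document; each statement's English description precedes it below -/
import Mathlib

section
/- If the n-tuple (μ₁,…,μₙ) of Borel probability measures on ℝ is jointly mixable with center C, then the average measure μ = (μ₁ + ⋯ + μₙ)/n is n-completely mixable with n-center C/n. -/
/-!
Let `P` be a joint mix of `(μ₁, …, μₙ)` concentrated on `{x₁ + ⋯ + xₙ = C}`. Averaging the
pushforwards of `P` under the `n` cyclic rotations of the coordinates gives a probability measure
whose every marginal is the average `(μ₁ + ⋯ + μₙ)/n`, and which is still concentrated on the same
hyperplane, since rotating the coordinates does not change their sum.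
-/

open MeasureTheory ENNReal

/-- The tuple `μ` of Borel probability measures on ℝ is jointly mixable with center `C`:
there is a probability measure on ℝⁿ whose `i`-th one-dimensional marginal is `μ i` for each `i`
and which gives probability one to the hyperplane `{x : x₁ + ⋯ + xₙ = C}`. -/
def IsJointMix (n : ℕ) (μ : Fin n → Measure ℝ) (C : ℝ) : Prop :=
  ∃ P : Measure (Fin n → ℝ), IsProbabilityMeasure P ∧
    (∀ i, P.map (fun x => x i) = μ i) ∧
    P {x | ∑ i, x i = C} = 1

/-- A Borel probability measure `μ` on ℝ is `n`-completely mixable with `n`-center `c`. -/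
def IsCompletelyMixable (n : ℕ) (μ : Measure ℝ) (c : ℝ) : Prop :=
  IsJointMix n (fun _ => μ) (n * c)

theorem measurable_pi_comp_addRight {ι α : Type*} [Add ι] [MeasurableSpace α] (k : ι) :
    Measurable fun (x : ι → α) i => x (i + k) := by
  fun_prop

theorem preimage_comp_addRight_setOf_sum_eq {ι α : Type*} [Fintype ι] [AddGroup ι]
    [AddCommMonoid α] (k : ι) (C : α) :
    (fun (x : ι → α) i => x (i + k)) ⁻¹' {x | ∑ i, x i = C} = {x | ∑ i, x i = C} := by
  ext x
  simp only [Set.mem_preimage, Set.mem_ofPred_eq]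
  rw [show ∑ i, x (i + k) = ∑ i, x i from Equiv.sum_comp (Equiv.addRight k) x]

namespace MeasureTheory.Measure

theorem inv_card_smul_sum_apply_of_forall_eq {ι Ω : Type*} [Fintype ι] [Nonempty ι]
    [MeasurableSpace Ω] (ν : ι → Measure Ω) {s : Set Ω} {c : ℝ≥0∞} (h : ∀ k, ν k s = c) :
    ((Fintype.card ι : ℝ≥0∞)⁻¹ • ∑ k, ν k) s = c := by
  simp only [smul_apply, coe_finsetSum, Finset.sum_apply, h, Finset.sum_const,
    Finset.card_univ, nsmul_eq_mul, smul_eq_mul, ← mul_assoc]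
  rw [ENNReal.inv_mul_cancel (by simp) (by simp), one_mul]

variable {ι α : Type*} [Fintype ι] [AddGroup ι] [MeasurableSpace α]

noncomputable def shiftAverage (P : Measure (ι → α)) : Measure (ι → α) :=
  (Fintype.card ι : ℝ≥0∞)⁻¹ • ∑ k, P.map (fun x i => x (i + k))

theorem isProbabilityMeasure_shiftAverage [Nonempty ι] (P : Measure (ι → α))
    [IsProbabilityMeasure P] : IsProbabilityMeasure P.shiftAverage :=
  ⟨inv_card_smul_sum_apply_of_forall_eq _ fun k =>
    have := isProbabilityMeasure_map (measurable_pi_comp_addRight (α := α) k).aemeasurable (μ := P)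
    measure_univ⟩

theorem map_eval_shiftAverage (P : Measure (ι → α)) (i : ι) :
    P.shiftAverage.map (fun x => x i) =
      (Fintype.card ι : ℝ≥0∞)⁻¹ • ∑ j, P.map (fun x => x j) := by
  ext s hs
  have hmap (k : ι) : P.map (fun x i => x (i + k)) ((fun x => x i) ⁻¹' s) =
      P.map (fun x => x (i + k)) s := by
    rw [map_apply (measurable_pi_comp_addRight k) (measurable_pi_apply i hs),
      map_apply (measurable_pi_apply _) hs]
    rfl
  rw [map_apply (measurable_pi_apply i) hs, shiftAverage]
  simp only [smul_apply, coe_finsetSum, Finset.sum_apply, hmap]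
  exact congrArg _ (Fintype.sum_equiv (Equiv.addLeft i) _ _ fun _ => rfl)

theorem shiftAverage_apply_eq_one [Nonempty ι] (P : Measure (ι → α)) [IsProbabilityMeasure P]
    {S : Set (ι → α)} (hS : ∀ k : ι, (fun x i => x (i + k)) ⁻¹' S = S) (hPS : P S = 1) :
    P.shiftAverage S = 1 := by
  refine inv_card_smul_sum_apply_of_forall_eq _ fun k => le_antisymm prob_le_one ?_
  calc 1 = P ((fun x i => x (i + k)) ⁻¹' S) := by rw [hS, hPS]
    _ ≤ _ := le_map_apply (measurable_pi_comp_addRight k).aemeasurable S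

end MeasureTheory.Measure

theorem stmt0_general (n : ℕ) (hn : 0 < n) (μ : Fin n → Measure ℝ) (C : ℝ)
    (hJM : IsJointMix n μ C) :
    IsCompletelyMixable n ((n : ℝ≥0∞)⁻¹ • ∑ i, μ i) (C / n) := by
  have : NeZero n := ⟨hn.ne'⟩
  obtain ⟨P, hP, hmarg, hsum⟩ := hJM
  refine ⟨P.shiftAverage, P.isProbabilityMeasure_shiftAverage, fun i => ?_, ?_⟩
  · simpa [hmarg] using P.map_eval_shiftAverage i
  · rw [mul_div_cancel₀ C (by positivity)]
    exact P.shiftAverage_apply_eq_one (preimage_comp_addRight_setOf_sum_eq · C) hsum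

theorem stmt0 (n : ℕ) (hn : 0 < n) (μ : Fin n → Measure ℝ)
    (hprob : ∀ i, IsProbabilityMeasure (μ i)) (C : ℝ)
    (hJM : IsJointMix n μ C) :
    IsCompletelyMixable n ((n : ℝ≥0∞)⁻¹ • ∑ i, μ i) (C / n) :=
  stmt0_general n hn μ C hJM
end

section
/- Let 1 ≤ k < n and let ν and γ be Borel probability measures on ℝ such that ν is k-completely mixable with k-center c₁ and γ is (n−k)-completely mixable with (n−k)-center c₂. Then the mixture (k·ν + (n−k)·γ)/n is n-completely mixable with n-center (k·c₁ + (n−k)·c₂)/n. In particular, for any x, y ∈ ℝ, the measure (k·δₓ + (n−k)·δ_y)/n is n-completely mixable. -/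
open MeasureTheory ENNReal

/-! Glue a `k`-mix of `ν` and an `(n - k)`-mix of `γ` side by side (independently) into a joint
mix of the tuple `(ν, …, ν, γ, …, γ)`, then average its `n` cyclic rotations: every coordinate
of the average has the law `(k ν + (n - k) γ) / n`, and the sum of the coordinates is unchanged. -/

lemma measurableSet_setOf_sum_eq (n : ℕ) (C : ℝ) : MeasurableSet {x : Fin n → ℝ | ∑ i, x i = C} :=
  measurableSet_eq_fun (by fun_prop) measurable_const

namespace IsJointMix

variable {n : ℕ} {μ : Fin n → Measure ℝ} {C : ℝ}

lemma sum_smul {ι : Type*} [Fintype ι] {μ : ι → Fin n → Measure ℝ} (w : ι → ℝ≥0∞)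
    (hw : ∑ j, w j = 1) (h : ∀ j, IsJointMix n (μ j) C) :
    IsJointMix n (fun i => ∑ j, w j • μ j i) C := by
  choose P hP hmarg hsum using h
  refine ⟨∑ j, w j • P j, ⟨?_⟩, fun i => ?_, ?_⟩
  · simp [hw]
  · rw [Measure.map_finset_sum' (measurable_pi_apply i).aemeasurable]
    simp_rw [Measure.map_smul, hmarg]
  · simp [hsum, hw]

lemma comp_perm (h : IsJointMix n μ C) (σ : Equiv.Perm (Fin n)) : IsJointMix n (μ ∘ σ) C := by
  obtain ⟨P, hP, hmarg, hsum⟩ := h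
  have hσ : Measurable fun x : Fin n → ℝ => x ∘ σ := by fun_prop
  refine ⟨P.map (· ∘ σ), Measure.isProbabilityMeasure_map hσ.aemeasurable, fun i => ?_, ?_⟩
  · rw [Measure.map_map (measurable_pi_apply i) hσ]
    exact hmarg (σ i)
  · rw [Measure.map_apply hσ (measurableSet_setOf_sum_eq n C)]
    simpa [Equiv.sum_comp] using hsum

lemma append {k m : ℕ} {μ : Fin k → Measure ℝ} {ρ : Fin m → Measure ℝ} {C D : ℝ}
    (hμ : IsJointMix k μ C) (hρ : IsJointMix m ρ D) :
    IsJointMix (k + m) (Fin.append μ ρ) (C + D) := by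
  obtain ⟨P, hP, hPmarg, hPsum⟩ := hμ
  obtain ⟨Q, hQ, hQmarg, hQsum⟩ := hρ
  set f : (Fin k → ℝ) × (Fin m → ℝ) → Fin (k + m) → ℝ := fun pq => Fin.append pq.1 pq.2
  have hf : Measurable f := (Fin.continuous_append k m).measurable
  refine ⟨(P.prod Q).map f, Measure.isProbabilityMeasure_map hf.aemeasurable, fun i => ?_, ?_⟩
  · rw [Measure.map_map (measurable_pi_apply i) hf]
    induction i using Fin.addCases with
    | left j =>
      have : (· (Fin.castAdd m j)) ∘ f = (· j) ∘ Prod.fst := by ext; simp [f]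
      rw [this, ← Measure.map_map (measurable_pi_apply j) measurable_fst, ← Measure.fst,
        Measure.fst_prod, hPmarg, Fin.append_left]
    | right j =>
      have : (· (Fin.natAdd k j)) ∘ f = (· j) ∘ Prod.snd := by ext; simp [f]
      rw [this, ← Measure.map_map (measurable_pi_apply j) measurable_snd, ← Measure.snd,
        Measure.snd_prod, hQmarg, Fin.append_right]
  · have hsub : {p : Fin k → ℝ | ∑ i, p i = C} ×ˢ {q : Fin m → ℝ | ∑ i, q i = D} ⊆
        f ⁻¹' {x | ∑ i, x i = C + D} := by
      rintro ⟨p, q⟩ ⟨hp, hq⟩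
      simp_all [f, Fin.sum_univ_add]
    refine le_antisymm prob_le_one ?_
    calc (1 : ℝ≥0∞) = P {p | ∑ i, p i = C} * Q {q | ∑ i, q i = D} := by rw [hPsum, hQsum, one_mul]
      _ = P.prod Q (_ ×ˢ _) := (Measure.prod_prod _ _).symm
      _ ≤ P.prod Q (f ⁻¹' _) := measure_mono hsub
      _ = _ := (Measure.map_apply hf (measurableSet_setOf_sum_eq _ _)).symm

lemma isCompletelyMixable_average [NeZero n] (h : IsJointMix n μ C) :
    IsCompletelyMixable n ((n : ℝ≥0∞)⁻¹ • ∑ i, μ i) (C / n) := by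
  have hw : ∑ _j : Fin n, (n : ℝ≥0∞)⁻¹ = 1 := by
    simp [ENNReal.mul_inv_cancel (NeZero.ne (n : ℝ≥0∞)) (natCast_ne_top n)]
  have hrot := sum_smul _ hw fun j => h.comp_perm (Equiv.addRight j)
  unfold IsCompletelyMixable
  convert hrot using 1
  · funext i
    rw [Finset.smul_sum]
    exact (Equiv.sum_comp (Equiv.addLeft i) _).symm
  · exact mul_div_cancel₀ C (NeZero.ne (n : ℝ))

end IsJointMix

lemma isCompletelyMixable_dirac (n : ℕ) (x : ℝ) : IsCompletelyMixable n (Measure.dirac x) x := by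
  refine ⟨Measure.dirac fun _ => x, inferInstance, fun i => ?_, ?_⟩
  · exact Measure.map_dirac' (measurable_pi_apply i) _
  · rw [Measure.dirac_apply_of_mem]
    simp [mul_comm]

lemma IsCompletelyMixable.mixture {k m : ℕ} [NeZero (k + m)] {ν γ : Measure ℝ} {c₁ c₂ : ℝ}
    (hν : IsCompletelyMixable k ν c₁) (hγ : IsCompletelyMixable m γ c₂) :
    IsCompletelyMixable (k + m)
      (((k + m : ℕ) : ℝ≥0∞)⁻¹ • ((k : ℝ≥0∞) • ν + (m : ℝ≥0∞) • γ))
      ((k * c₁ + m * c₂) / (k + m : ℕ)) := by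
  have hmix := (IsJointMix.append hν hγ).isCompletelyMixable_average
  simpa [Fin.sum_univ_add, Nat.cast_smul_eq_nsmul] using hmix

theorem stmt2_general (n k : ℕ) (hkn : k < n)
    (ν γ : Measure ℝ)
    (c₁ c₂ : ℝ)
    (hν : IsCompletelyMixable k ν c₁) (hγ : IsCompletelyMixable (n - k) γ c₂) :
    IsCompletelyMixable n
      ((n : ℝ≥0∞)⁻¹ • ((k : ℝ≥0∞) • ν + ((n - k : ℕ) : ℝ≥0∞) • γ))
      ((k * c₁ + ((n - k : ℕ) : ℝ) * c₂) / n) ∧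
    ∀ x y : ℝ, ∃ c : ℝ, IsCompletelyMixable n
      ((n : ℝ≥0∞)⁻¹ • ((k : ℝ≥0∞) • Measure.dirac x + ((n - k : ℕ) : ℝ≥0∞) • Measure.dirac y)) c := by
  obtain ⟨m, rfl⟩ := Nat.exists_eq_add_of_le hkn.le
  have : NeZero (k + m) := ⟨by omega⟩
  rw [Nat.add_sub_cancel_left] at hγ ⊢
  exact ⟨hν.mixture hγ, fun x y =>
    ⟨_, (isCompletelyMixable_dirac k x).mixture (isCompletelyMixable_dirac m y)⟩⟩

theorem stmt2 (n k : ℕ) (hk : 1 ≤ k) (hkn : k < n)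
    (ν γ : Measure ℝ) [IsProbabilityMeasure ν] [IsProbabilityMeasure γ]
    (c₁ c₂ : ℝ)
    (hν : IsCompletelyMixable k ν c₁) (hγ : IsCompletelyMixable (n - k) γ c₂) :
    IsCompletelyMixable n
      ((n : ℝ≥0∞)⁻¹ • ((k : ℝ≥0∞) • ν + ((n - k : ℕ) : ℝ≥0∞) • γ))
      ((k * c₁ + ((n - k : ℕ) : ℝ) * c₂) / n) ∧
    ∀ x y : ℝ, ∃ c : ℝ, IsCompletelyMixable n
      ((n : ℝ≥0∞)⁻¹ • ((k : ℝ≥0∞) • Measure.dirac x + ((n - k : ℕ) : ℝ≥0∞) • Measure.dirac y)) c :=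
  stmt2_general n k hkn ν γ c₁ c₂ hν hγ
end

section
/- Let (μ₁,…,μₙ) be an n-tuple of Borel probability measures on ℝ that is jointly mixable, and suppose that at least n−2 of the measures μ₁,…,μₙ have finite mean (i.e., ∫|x| dμᵢ(x) < ∞). Then the center of (μ₁,…,μₙ) is unique: if (μ₁,…,μₙ) is jointly mixable with center C₁ and with center C₂, then C₁ = C₂. -/
open MeasureTheory ENNReal

/-!
If `P` is a joint mix with center `C` and the coordinates in `S` are integrable, then so is the
sum of the (at most two) remaining coordinates, being `C` minus an integrable function. Truncation
to `[-M, M]` is a `1`-Lipschitz odd map, so it does not increase the absolute value of a sum of at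
most two terms; dominated convergence therefore gives
`∑ k ∉ S, ∫ truncate M dμₖ → C - ∑ k ∈ S, ∫ x dμₖ`.
The left side depends only on the marginals, so `C` is determined by them.
-/

open Filter Topology

noncomputable def truncate (M : ℕ) (t : ℝ) : ℝ := max (min t M) (-M)

lemma abs_truncate_sub_truncate_le (M : ℕ) (a b : ℝ) : |truncate M a - truncate M b| ≤ |a - b| :=
  calc |truncate M a - truncate M b| ≤ |min a M - min b M| := abs_max_sub_max_le_abs _ _ _
    _ ≤ max |a - b| |(M : ℝ) - M| := abs_min_sub_min_le_max _ _ _ _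
    _ = |a - b| := by simp

lemma truncate_neg (M : ℕ) (t : ℝ) : truncate M (-t) = -truncate M t := by
  have hM : (0 : ℝ) ≤ M := M.cast_nonneg
  simp only [truncate, max_def, min_def]
  split_ifs <;> linarith

lemma abs_truncate_add_truncate_le (M : ℕ) (a b : ℝ) : |truncate M a + truncate M b| ≤ |a + b| := by
  simpa [truncate_neg] using abs_truncate_sub_truncate_le M a (-b)

lemma abs_truncate_le_abs (M : ℕ) (a : ℝ) : |truncate M a| ≤ |a| := by
  have h0 : truncate M 0 = 0 := by simp [truncate]
  simpa [h0] using abs_truncate_add_truncate_le M a 0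

lemma abs_truncate_le (M : ℕ) (t : ℝ) : |truncate M t| ≤ M := by
  have hM : (0 : ℝ) ≤ M := M.cast_nonneg
  rw [abs_le]
  exact ⟨le_max_right _ _, max_le (min_le_right _ _) (by linarith)⟩

@[fun_prop]
lemma continuous_truncate (M : ℕ) : Continuous (truncate M) := by
  unfold truncate
  fun_prop

lemma tendsto_truncate_atTop (t : ℝ) : Tendsto (fun M : ℕ => truncate M t) atTop (𝓝 t) := by
  refine tendsto_const_nhds.congr' ?_
  filter_upwards [eventually_ge_atTop ⌈|t|⌉₊] with M hM
  have ht : |t| ≤ M := (Nat.le_ceil _).trans (by exact_mod_cast hM)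
  rw [abs_le] at ht
  simp [truncate, min_eq_left ht.2, max_eq_left ht.1]

lemma abs_sum_truncate_le_of_card_le_two {ι : Type*} (M : ℕ) {T : Finset ι} (hT : T.card ≤ 2)
    (f : ι → ℝ) : |∑ k ∈ T, truncate M (f k)| ≤ |∑ k ∈ T, f k| := by
  classical
  obtain hT | hT | hT : T.card = 0 ∨ T.card = 1 ∨ T.card = 2 := by omega
  · simp [Finset.card_eq_zero.mp hT]
  · obtain ⟨i, rfl⟩ := Finset.card_eq_one.mp hT
    simpa using abs_truncate_le_abs M (f i)
  · obtain ⟨i, j, hij, rfl⟩ := Finset.card_eq_two.mp hT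
    simpa [Finset.sum_pair hij] using abs_truncate_add_truncate_le M (f i) (f j)

lemma tendsto_integral_sum_truncate {Ω ι : Type*} [MeasurableSpace Ω] {P : Measure Ω}
    {X : ι → Ω → ℝ} {T : Finset ι} (hX : ∀ k, AEStronglyMeasurable (X k) P)
    (hT : T.card ≤ 2) (hint : Integrable (fun ω => ∑ k ∈ T, X k ω) P) :
    Tendsto (fun M : ℕ => ∫ ω, ∑ k ∈ T, truncate M (X k ω) ∂P) atTop
      (𝓝 (∫ ω, ∑ k ∈ T, X k ω ∂P)) := by
  refine tendsto_integral_of_dominated_convergence _ (fun M => ?_) hint.norm (fun M => ?_) ?_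
  · exact Finset.aestronglyMeasurable_fun_sum _ fun k _ =>
      (continuous_truncate M).comp_aestronglyMeasurable (hX k)
  · exact .of_forall fun ω => abs_sum_truncate_le_of_card_le_two M hT _
  · exact .of_forall fun ω => tendsto_finsetSum _ fun k _ => tendsto_truncate_atTop _

section Marginals

variable {ι : Type*} {P : Measure (ι → ℝ)} {μ : ι → Measure ℝ}

lemma integral_comp_eval_of_map_eq (hmarg : ∀ i, P.map (fun x => x i) = μ i) (k : ι)
    {f : ℝ → ℝ} (hf : Measurable f) : ∫ x, f (x k) ∂P = ∫ t, f t ∂μ k := by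
  rw [← hmarg k, integral_map (measurable_pi_apply k).aemeasurable hf.aestronglyMeasurable]

lemma integrable_eval_of_map_eq (hmarg : ∀ i, P.map (fun x => x i) = μ i) {k : ι}
    (hk : Integrable (fun t : ℝ => t) (μ k)) : Integrable (fun x : ι → ℝ => x k) P := by
  rw [← hmarg k] at hk
  exact (integrable_map_measure aestronglyMeasurable_id
    (measurable_pi_apply k).aemeasurable).mp hk

lemma integral_sum_truncate_of_map_eq [IsFiniteMeasure P]
    (hmarg : ∀ i, P.map (fun x => x i) = μ i) (M : ℕ) (T : Finset ι) :
    ∫ x, ∑ k ∈ T, truncate M (x k) ∂P = ∑ k ∈ T, ∫ t, truncate M t ∂μ k := by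
  have hbdd : ∀ k ∈ T, Integrable (fun x : ι → ℝ => truncate M (x k)) P := fun k _ =>
    Integrable.of_bound ((continuous_truncate M).measurable.comp
      (measurable_pi_apply k)).aestronglyMeasurable M
      (.of_forall fun x => abs_truncate_le M (x k))
  rw [integral_finsetSum _ hbdd]
  exact Finset.sum_congr rfl fun k _ =>
    integral_comp_eval_of_map_eq hmarg k (continuous_truncate M).measurable

lemma integral_sum_compl_of_ae_sum_eq [Fintype ι] [DecidableEq ι] [IsProbabilityMeasure P]
    (hmarg : ∀ i, P.map (fun x => x i) = μ i) {C : ℝ} (hC : ∀ᵐ x ∂P, ∑ i, x i = C)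
    {S : Finset ι} (hS : ∀ i ∈ S, Integrable (fun t : ℝ => t) (μ i)) :
    Integrable (fun x : ι → ℝ => ∑ k ∈ Sᶜ, x k) P ∧
      ∫ x, ∑ k ∈ Sᶜ, x k ∂P = C - ∑ k ∈ S, ∫ t, t ∂μ k := by
  have hcoord : ∀ k ∈ S, Integrable (fun x : ι → ℝ => x k) P := fun k hk =>
    integrable_eval_of_map_eq hmarg (hS k hk)
  have hsumS := integrable_finsetSum S hcoord
  have hsplit : (fun x : ι → ℝ => ∑ k ∈ Sᶜ, x k) =ᵐ[P] fun x => C - ∑ k ∈ S, x k := by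
    filter_upwards [hC] with x hx
    rw [← hx, ← Finset.sum_add_sum_compl S x, add_sub_cancel_left]
  refine ⟨((integrable_const C).sub hsumS).congr hsplit.symm, ?_⟩
  rw [integral_congr_ae hsplit, integral_sub (integrable_const C) hsumS,
    integral_finsetSum S hcoord]
  have hmeans : ∑ k ∈ S, ∫ x, x k ∂P = ∑ k ∈ S, ∫ t, t ∂μ k := Finset.sum_congr rfl
    fun k _ => integral_comp_eval_of_map_eq hmarg k (f := fun t => t) measurable_id
  simp [hmeans]

end Marginals

lemma IsJointMix.tendsto_sum_integral_truncate {n : ℕ} {μ : Fin n → Measure ℝ} {C : ℝ}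
    (h : IsJointMix n μ C) {S : Finset (Fin n)} (hS : n - 2 ≤ S.card)
    (hInt : ∀ i ∈ S, Integrable (fun x : ℝ => x) (μ i)) :
    Tendsto (fun M : ℕ => ∑ k ∈ Sᶜ, ∫ t, truncate M t ∂μ k) atTop
      (𝓝 (C - ∑ k ∈ S, ∫ t, t ∂μ k)) := by
  obtain ⟨P, hP, hmarg, hC⟩ := h
  have hmeas : MeasurableSet {x : Fin n → ℝ | ∑ i, x i = C} :=
    measurableSet_eq_fun (by fun_prop) measurable_const
  have hae : ∀ᵐ x ∂P, ∑ i, x i = C :=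
    (ae_iff_measure_eq hmeas.nullMeasurableSet).mpr (by rw [hC, measure_univ])
  have hcard : Sᶜ.card ≤ 2 := by
    rw [Finset.card_compl, Fintype.card_fin]
    omega
  obtain ⟨hint, hval⟩ := integral_sum_compl_of_ae_sum_eq hmarg hae hInt
  have hlim := tendsto_integral_sum_truncate
    (fun k => (measurable_pi_apply k).aestronglyMeasurable) hcard hint
  simpa only [integral_sum_truncate_of_map_eq hmarg, hval] using hlim

theorem stmt4_general (n : ℕ) (μ : Fin n → Measure ℝ)
    (S : Finset (Fin n)) (hS : n - 2 ≤ S.card)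
    (hInt : ∀ i ∈ S, Integrable (fun x : ℝ => x) (μ i))
    (C₁ C₂ : ℝ) (h₁ : IsJointMix n μ C₁) (h₂ : IsJointMix n μ C₂) :
    C₁ = C₂ := by
  have h := tendsto_nhds_unique (h₁.tendsto_sum_integral_truncate hS hInt)
    (h₂.tendsto_sum_integral_truncate hS hInt)
  linarith

theorem stmt4 (n : ℕ) (μ : Fin n → Measure ℝ) (hprob : ∀ i, IsProbabilityMeasure (μ i))
    (S : Finset (Fin n)) (hS : n - 2 ≤ S.card)
    (hInt : ∀ i ∈ S, Integrable (fun x : ℝ => x) (μ i))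
    (C₁ C₂ : ℝ) (h₁ : IsJointMix n μ C₁) (h₂ : IsJointMix n μ C₂) :
    C₁ = C₂ :=
  stmt4_general n μ S hS hInt C₁ C₂ h₁ h₂
end

section
/- Let (μ₁,…,μₙ) be an n-tuple of Borel probability measures on ℝ that is jointly mixable, and suppose that at least n−1 of the measures μ₁,…,μₙ satisfy lim_{x→∞} x·μ({y ∈ ℝ : |y| > x}) = 0. Then the center of (μ₁,…,μₙ) is unique: if (μ₁,…,μₙ) is jointly mixable with center C₁ and with center C₂, then C₁ = C₂. -/
/-!
Write `clip L` for truncation to `[-L, L]`. For a joint mix with center `C`, the coordinates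
satisfy `∑_{i ∈ S} xᵢ = C - ∑_{i ∉ S} xᵢ`; since at most one index lies outside `S`, the law `ν`
of `∑_{i ∉ S} xᵢ` is the same for every joint mix. When `|xᵢ| ≤ r` for all `i ∈ S`, clipping at
`L = (#S + 1) r` commutes with the sum, so `∫ clip L (C - s) dν` differs from
`∑_{i ∈ S} ∫ clip L dμᵢ`, which depends only on the marginals, by at most
`(#S + 1)² r ∑_{i ∈ S} μᵢ {|y| > r}`, and this tends to `0` by the tail assumption.
Hence for two centers `∫ (clip L (C₁ - s) - clip L (C₂ - s)) dν → 0`, whereas by dominated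
convergence this integral tends to `C₁ - C₂`.
-/

open MeasureTheory ENNReal

open Filter Topology Finset

noncomputable def clip (L x : ℝ) : ℝ := max (-L) (min x L)

section Clip

variable {L : ℝ}

lemma clip_of_abs_le {x : ℝ} (h : |x| ≤ L) : clip L x = x := by
  rw [abs_le] at h
  simp [clip, h.1, h.2]

lemma abs_clip_le (hL : 0 ≤ L) (x : ℝ) : |clip L x| ≤ L :=
  abs_le.2 ⟨le_max_left _ _, max_le (by linarith) (min_le_right _ _)⟩

lemma abs_clip_sub_clip_le (L x y : ℝ) : |clip L x - clip L y| ≤ |x - y| := by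
  simp only [clip, max_comm (-L)]
  refine (abs_max_sub_max_le_abs _ _ _).trans ?_
  simpa using abs_min_sub_min_le_max x L y L

@[fun_prop]
lemma continuous_clip (L : ℝ) : Continuous (clip L) :=
  continuous_const.max (continuous_id.min continuous_const)

lemma tendsto_clip_atTop (x : ℝ) : Tendsto (fun L => clip L x) atTop (𝓝 x) :=
  tendsto_const_nhds.congr' <| (eventually_ge_atTop |x|).mono fun _ h => (clip_of_abs_le h).symm

lemma integrable_clip_comp {α : Type*} [MeasurableSpace α] {ν : Measure α} [IsFiniteMeasure ν]
    (hL : 0 ≤ L) {f : α → ℝ} (hf : Measurable f) : Integrable (fun a => clip L (f a)) ν :=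
  .of_bound ((continuous_clip L).measurable.comp hf).aestronglyMeasurable L
    (ae_of_all _ fun _ => abs_clip_le hL _)

end Clip

lemma tendsto_integral_clip_sub_clip (ν : Measure ℝ) [IsProbabilityMeasure ν] (a b : ℝ) :
    Tendsto (fun L => ∫ s, (clip L (a - s) - clip L (b - s)) ∂ν) atTop (𝓝 (a - b)) := by
  have h := tendsto_integral_filter_of_dominated_convergence (μ := ν) (fun _ => |a - b|)
    (F := fun L s => clip L (a - s) - clip L (b - s)) (f := fun _ => a - b)
    (.of_forall fun L =>
      (by fun_prop : Continuous fun s => clip L (a - s) - clip L (b - s)).aestronglyMeasurable)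
    (.of_forall fun L => ae_of_all _ fun s => by
      simpa using abs_clip_sub_clip_le L (a - s) (b - s))
    (integrable_const _)
    (ae_of_all _ fun s => by
      simpa using (tendsto_clip_atTop (a - s)).sub (tendsto_clip_atTop (b - s)))
  simpa using h

lemma map_sum_eq_of_card_le_one {ι : Type*} {P Q : Measure (ι → ℝ)} [IsProbabilityMeasure P]
    [IsProbabilityMeasure Q] {μ : ι → Measure ℝ} (hP : ∀ i, P.map (fun x => x i) = μ i)
    (hQ : ∀ i, Q.map (fun x => x i) = μ i) {T : Finset ι} (hT : #T ≤ 1) :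
    P.map (fun x => ∑ i ∈ T, x i) = Q.map (fun x => ∑ i ∈ T, x i) := by
  rcases T.eq_empty_or_nonempty with rfl | hne
  · simp [Measure.map_const]
  · obtain ⟨i, rfl⟩ := card_eq_one.1 (le_antisymm hT hne.card_pos)
    simp [hP, hQ]

lemma abs_clip_sum_sub_sum_clip_le {ι : Type*} (S : Finset ι) {r L : ℝ} (hr : 0 ≤ r)
    (hL : (#S + 1) * r ≤ L) (x : ι → ℝ) :
    |clip L (∑ i ∈ S, x i) - ∑ i ∈ S, clip L (x i)| ≤
      (⋃ i ∈ S, {x : ι → ℝ | r < |x i|}).indicator (fun _ => (#S + 1) * L) x := by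
  have hL₀ : 0 ≤ L := le_trans (by positivity) hL
  by_cases hx : ∃ i ∈ S, r < |x i|
  · rw [Set.indicator_of_mem (by simpa using hx)]
    calc |clip L (∑ i ∈ S, x i) - ∑ i ∈ S, clip L (x i)|
        ≤ |clip L (∑ i ∈ S, x i)| + ∑ i ∈ S, |clip L (x i)| :=
          (abs_sub _ _).trans (by gcongr; exact abs_sum_le_sum_abs _ _)
      _ ≤ L + ∑ _i ∈ S, L := by gcongr with i <;> exact abs_clip_le hL₀ _
      _ = (#S + 1) * L := by rw [sum_const, nsmul_eq_mul]; ring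
  · push Not at hx
    rw [Set.indicator_of_notMem (by simpa using hx)]
    have hsum : |∑ i ∈ S, x i| ≤ L :=
      calc |∑ i ∈ S, x i| ≤ ∑ i ∈ S, |x i| := abs_sum_le_sum_abs _ _
        _ ≤ ∑ _i ∈ S, r := sum_le_sum hx
        _ ≤ L := by rw [sum_const, nsmul_eq_mul]; linarith
    have hterm : ∀ i ∈ S, clip L (x i) = x i := fun i hi =>
      clip_of_abs_le ((hx i hi).trans (by nlinarith))
    rw [sum_congr rfl hterm, clip_of_abs_le hsum, sub_self, abs_zero]

lemma abs_integral_clip_sum_sub_le {ι : Type*} {P : Measure (ι → ℝ)} [IsFiniteMeasure P]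
    {μ : ι → Measure ℝ} (hP : ∀ i, P.map (fun x => x i) = μ i) (S : Finset ι) {r L : ℝ}
    (hr : 0 ≤ r) (hL : (#S + 1) * r ≤ L) :
    |∫ x, clip L (∑ i ∈ S, x i) ∂P - ∑ i ∈ S, ∫ y, clip L y ∂μ i| ≤
      (#S + 1) * L * ∑ i ∈ S, (μ i).real {y | r < |y|} := by
  have hL₀ : 0 ≤ L := le_trans (by positivity) hL
  have hmeas : ∀ i, Measurable fun x : ι → ℝ => x i := measurable_pi_apply
  have htail : MeasurableSet {y : ℝ | r < |y|} :=
    measurableSet_lt measurable_const measurable_abs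
  have hB : MeasurableSet (⋃ i ∈ S, {x : ι → ℝ | r < |x i|}) :=
    S.measurableSet_biUnion fun i _ => htail.preimage (hmeas i)
  have hmarg : ∀ i, ∫ y, clip L y ∂μ i = ∫ x, clip L (x i) ∂P := fun i => by
    rw [← hP i, integral_map (hmeas i).aemeasurable (continuous_clip L).aestronglyMeasurable]
  have hPB : P.real (⋃ i ∈ S, {x : ι → ℝ | r < |x i|}) ≤ ∑ i ∈ S, (μ i).real {y | r < |y|} := by
    refine (measureReal_biUnion_finset_le _ _).trans_eq (sum_congr rfl fun i _ => ?_)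
    rw [← hP i, map_measureReal_apply (hmeas i) htail]
    rfl
  rw [sum_congr rfl fun i _ => hmarg i, ← integral_finsetSum S fun i _ =>
    integrable_clip_comp hL₀ (hmeas i), ← integral_sub
    (integrable_clip_comp hL₀ (S.measurable_sum fun i _ => hmeas i))
    (integrable_finsetSum S fun i _ => integrable_clip_comp hL₀ (hmeas i))]
  calc |∫ x, (clip L (∑ i ∈ S, x i) - ∑ i ∈ S, clip L (x i)) ∂P|
      ≤ ∫ x, (⋃ i ∈ S, {x : ι → ℝ | r < |x i|}).indicator (fun _ => (#S + 1) * L) x ∂P := by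
        rw [← Real.norm_eq_abs]
        exact norm_integral_le_of_norm_le ((integrable_const _).indicator hB)
          (ae_of_all _ (abs_clip_sum_sub_sum_clip_le S hr hL))
    _ = (#S + 1) * L * P.real (⋃ i ∈ S, {x : ι → ℝ | r < |x i|}) := by
        rw [integral_indicator_const _ hB, smul_eq_mul, mul_comm]
    _ ≤ (#S + 1) * L * ∑ i ∈ S, (μ i).real {y | r < |y|} := by gcongr

lemma integral_clip_sum_eq_integral_map_compl {ι : Type*} [Fintype ι] [DecidableEq ι]
    {P : Measure (ι → ℝ)} [IsProbabilityMeasure P] {C : ℝ} (hC : P {x | ∑ i, x i = C} = 1)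
    (S : Finset ι) (L : ℝ) :
    ∫ x, clip L (∑ i ∈ S, x i) ∂P = ∫ s, clip L (C - s) ∂(P.map fun x => ∑ i ∈ Sᶜ, x i) := by
  have hsum : Measurable fun x : ι → ℝ => ∑ i ∈ Sᶜ, x i :=
    Sᶜ.measurable_sum fun i _ => measurable_pi_apply i
  have hae : ∀ᵐ x ∂P, ∑ i, x i = C := by
    rw [ae_iff_measure_eq, hC, measure_univ]
    exact (measurableSet_eq_fun (by fun_prop) measurable_const).nullMeasurableSet
  rw [integral_map hsum.aemeasurable
    (by fun_prop : Continuous fun s => clip L (C - s)).aestronglyMeasurable]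
  refine integral_congr_ae (hae.mono fun x hx => ?_)
  dsimp only
  rw [← hx, ← sum_add_sum_compl S, add_sub_cancel_right]

lemma abs_integral_clip_sub_clip_le {ι : Type*} [Fintype ι] [DecidableEq ι]
    {P₁ P₂ : Measure (ι → ℝ)} [IsProbabilityMeasure P₁] [IsProbabilityMeasure P₂]
    {μ : ι → Measure ℝ} (hP₁ : ∀ i, P₁.map (fun x => x i) = μ i)
    (hP₂ : ∀ i, P₂.map (fun x => x i) = μ i) {C₁ C₂ : ℝ} (hC₁ : P₁ {x | ∑ i, x i = C₁} = 1)
    (hC₂ : P₂ {x | ∑ i, x i = C₂} = 1) {S : Finset ι} (hS : #Sᶜ ≤ 1) {r L : ℝ} (hr : 0 ≤ r)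
    (hL : (#S + 1) * r ≤ L) :
    |∫ s, (clip L (C₁ - s) - clip L (C₂ - s)) ∂(P₁.map fun x => ∑ i ∈ Sᶜ, x i)| ≤
      2 * (#S + 1) * L * ∑ i ∈ S, (μ i).real {y | r < |y|} := by
  have hL₀ : 0 ≤ L := le_trans (by positivity) hL
  have e₁ := abs_integral_clip_sum_sub_le hP₁ S hr hL
  have e₂ := abs_integral_clip_sum_sub_le hP₂ S hr hL
  rw [integral_clip_sum_eq_integral_map_compl hC₁] at e₁
  rw [integral_clip_sum_eq_integral_map_compl hC₂, map_sum_eq_of_card_le_one hP₂ hP₁ hS,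
    abs_sub_comm] at e₂
  rw [integral_sub (integrable_clip_comp hL₀ (by fun_prop))
    (integrable_clip_comp hL₀ (by fun_prop))]
  linarith [abs_sub_le (∫ s, clip L (C₁ - s) ∂(P₁.map fun x => ∑ i ∈ Sᶜ, x i))
    (∑ i ∈ S, ∫ y, clip L y ∂μ i) (∫ s, clip L (C₂ - s) ∂(P₁.map fun x => ∑ i ∈ Sᶜ, x i))]

theorem stmt5_general (n : ℕ) (μ : Fin n → Measure ℝ)
    (S : Finset (Fin n)) (hS : n - 1 ≤ S.card)
    (hTail : ∀ i ∈ S,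
      Filter.Tendsto (fun x : ℝ => x * ((μ i) {y : ℝ | x < |y|}).toReal)
        Filter.atTop (nhds 0))
    (C₁ C₂ : ℝ) (h₁ : IsJointMix n μ C₁) (h₂ : IsJointMix n μ C₂) :
    C₁ = C₂ := by
  obtain ⟨P₁, _, hP₁, hC₁⟩ := h₁
  obtain ⟨P₂, _, hP₂, hC₂⟩ := h₂
  have hSc : #Sᶜ ≤ 1 := by rw [card_compl, Fintype.card_fin]; omega
  have : IsProbabilityMeasure (P₁.map fun x => ∑ i ∈ Sᶜ, x i) :=
    Measure.isProbabilityMeasure_map (by fun_prop)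
  have herr : Tendsto (fun r : ℝ => 2 * (#S + 1) * ((#S + 1) * r) *
      ∑ i ∈ S, (μ i).real {y | r < |y|}) atTop (𝓝 0) := by
    have h := (tendsto_finsetSum S hTail).const_mul (2 * (#S + 1) ^ 2 : ℝ)
    rw [sum_const_zero, mul_zero] at h
    refine h.congr fun r => ?_
    rw [← mul_sum]
    simp only [Measure.real]
    ring
  have hlim := (tendsto_integral_clip_sub_clip (P₁.map fun x => ∑ i ∈ Sᶜ, x i) C₁ C₂).comp
    (tendsto_id.const_mul_atTop (by positivity : (0 : ℝ) < #S + 1))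
  refine sub_eq_zero.1 (tendsto_nhds_unique hlim (squeeze_zero_norm' ?_ herr))
  filter_upwards [eventually_ge_atTop 0] with r hr
  exact abs_integral_clip_sub_clip_le hP₁ hP₂ hC₁ hC₂ hSc hr le_rfl

theorem stmt5 (n : ℕ) (μ : Fin n → Measure ℝ) (hprob : ∀ i, IsProbabilityMeasure (μ i))
    (S : Finset (Fin n)) (hS : n - 1 ≤ S.card)
    (hTail : ∀ i ∈ S,
      Filter.Tendsto (fun x : ℝ => x * ((μ i) {y : ℝ | x < |y|}).toReal)
        Filter.atTop (nhds 0))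
    (C₁ C₂ : ℝ) (h₁ : IsJointMix n μ C₁) (h₂ : IsJointMix n μ C₂) :
    C₁ = C₂ :=
  stmt5_general n μ S hS hTail C₁ C₂ h₁ h₂
end

section
/- Let μ be a Borel probability measure on ℝ that is n-completely mixable, and let Λₙ(μ) be the set of probability measures λ on ℝⁿ whose one-dimensional marginals all equal μ and such that λ({x ∈ ℝⁿ : x₁+⋯+xₙ = C}) = 1 for some C ∈ ℝ. Then Λₙ(μ) is a compact subset of the space of probability measures on ℝⁿ with the topology of weak convergence, the map φ : Λₙ(μ) → ℝ sending λ to its center C/n is continuous, and consequently the set of n-centers of μ is a nonempty compact subset of ℝ. -/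
/-!
The measures on ℝⁿ with all marginals equal to `μ` form a closed set (push-forward is weakly
continuous) and a tight one (each marginal is tight), hence a compact set by Prokhorov's theorem.
By the portmanteau theorem, concentration of `P` on the hyperplane `∑ xᵢ = C` is a closed
condition on the pair `(P, C)`, and tightness confines the admissible `C` to a compact set, so these
pairs form a compact set `G`. Both Λₙ(μ) and the set of `n`-centers are (up to scaling) projections
of `G`, and the center map is continuous because its graph is closed and its values lie in a
compact set.
-/

open MeasureTheory ENNReal

open Filter Set Topology

theorem continuous_of_isClosed_graph_of_isCompact {X Y : Type*} [TopologicalSpace X]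
    [TopologicalSpace Y] {f : X → Y} {K : Set Y} (hK : IsCompact K) (hfK : ∀ x, f x ∈ K)
    (hf : IsClosed {p : X × Y | f p.1 = p.2}) : Continuous f := by
  refine continuous_iff_continuousAt.2 fun x =>
    hK.tendsto_nhds_of_unique_mapClusterPt (Eventually.of_forall hfK) fun y _ hy => ?_
  obtain ⟨U, hUx, hUy⟩ := mapClusterPt_iff_ultrafilter.1 hy
  exact (hf.mem_of_tendsto (tendsto_id.mono_left hUx |>.prodMk_nhds hUy)
    (Eventually.of_forall fun _ => rfl)).symm

namespace MeasureTheory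

section LevelSets

variable {X : Type*} [TopologicalSpace X] [MeasurableSpace X]

lemma IsTightMeasureSet.exists_isCompact_of_measure_preimage_singleton_eq_one
    {Y : Type*} [TopologicalSpace Y] {f : X → Y} {S : Set (ProbabilityMeasure X)}
    (hS : IsTightMeasureSet {(P : Measure X) | P ∈ S}) (hf : Continuous f) :
    ∃ L : Set Y, IsCompact L ∧ ∀ P ∈ S, ∀ y, (P : Measure X) (f ⁻¹' {y}) = 1 → y ∈ L := by
  obtain ⟨K, hK, hKS⟩ :=
    isTightMeasureSet_iff_exists_isCompact_measure_compl_le.1 hS 2⁻¹ (by simp)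
  refine ⟨f '' K, hK.image hf, fun P hP y hy => ?_⟩
  by_contra hyK
  have hsub : f ⁻¹' {y} ⊆ Kᶜ := fun x hx hxK => hyK ⟨x, hxK, hx⟩
  have : (1 : ℝ≥0∞) ≤ 2⁻¹ := hy ▸ (measure_mono hsub).trans (hKS _ ⟨P, hP, rfl⟩)
  exact absurd this (by norm_num)

variable [OpensMeasurableSpace X]

lemma eq_of_measure_preimage_singleton_eq_one {Y : Type*} [TopologicalSpace Y] [T1Space Y]
    {f : X → Y} (hf : Continuous f) {P : Measure X} [IsProbabilityMeasure P] {a b : Y}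
    (ha : P (f ⁻¹' {a}) = 1) (hb : P (f ⁻¹' {b}) = 1) : a = b := by
  have hae : ∀ y, P (f ⁻¹' {y}) = 1 → ∀ᵐ x ∂P, f x = y := fun y hy =>
    mem_ae_iff.2 ((prob_compl_eq_zero_iff (isClosed_singleton.preimage hf).measurableSet).2 hy)
  obtain ⟨x, hxa, hxb⟩ := ((hae a ha).and (hae b hb)).exists
  exact hxa.symm.trans hxb

namespace ProbabilityMeasure

lemma isClosed_setOf_map_eq {Y : Type*} [TopologicalSpace Y] [MeasurableSpace Y]
    [HasOuterApproxClosed Y] [BorelSpace Y] {f : X → Y} (hf : Continuous f) (ν : Measure Y)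
    [IsProbabilityMeasure ν] :
    IsClosed {P : ProbabilityMeasure X | (P : Measure X).map f = ν} := by
  have : {P : ProbabilityMeasure X | (P : Measure X).map f = ν} =
      (fun P => P.map hf.measurable.aemeasurable) ⁻¹' {⟨ν, inferInstance⟩} := by
    ext P
    exact (Subtype.ext_iff (a1 := P.map _) (a2 := ⟨ν, _⟩)).symm
  rw [this]
  exact isClosed_singleton.preimage (continuous_map hf)

lemma isClosed_setOf_measure_preimage_singleton_eq_one [HasOuterApproxClosed X] {Y : Type*}
    [MetricSpace Y] {f : X → Y} (hf : Continuous f) :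
    IsClosed {p : ProbabilityMeasure X × Y | (p.1 : Measure X) (f ⁻¹' {p.2}) = 1} := by
  refine isClosed_iff_forall_filter.2 fun ⟨P, y⟩ F hF hFS hFP => ?_
  have hball : ∀ ε > 0, (P : Measure X) (f ⁻¹' Metric.closedBall y ε) = 1 := by
    intro ε hε
    have hev : ∀ᶠ p in F, (p.1 : Measure X) (f ⁻¹' Metric.closedBall y ε) = 1 := by
      filter_upwards [le_principal_iff.1 hFS,
        (continuous_snd.tendsto (P, y)).mono_left hFP (Metric.closedBall_mem_nhds y hε)]
        with p hp hpy
      exact le_antisymm prob_le_one (hp ▸ measure_mono fun x hx => by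
        simpa [show f x = p.2 from hx] using hpy)
    have hlim := limsup_measure_closed_le_of_tendsto
      ((continuous_fst.tendsto (P, y)).mono_left hFP)
      (F := f ⁻¹' Metric.closedBall y ε) (Metric.isClosed_closedBall.preimage hf)
    rw [limsup_congr hev, limsup_const] at hlim
    exact le_antisymm prob_le_one hlim
  show (P : Measure X) (f ⁻¹' {y}) = 1
  rw [← prob_compl_eq_zero_iff ((isClosed_singleton.preimage hf).measurableSet)]
  have hcover : (f ⁻¹' {y})ᶜ = ⋃ k : ℕ, (f ⁻¹' Metric.closedBall y (1 / (k + 1)))ᶜ := by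
    ext x
    simp only [mem_compl_iff, mem_preimage, mem_singleton_iff, mem_iUnion, Metric.mem_closedBall,
      not_le]
    rw [← Ne, ← dist_pos]
    exact ⟨exists_nat_one_div_lt, fun ⟨k, hk⟩ => lt_trans (by positivity) hk⟩
  rw [hcover]
  exact measure_iUnion_null fun k => (prob_compl_eq_zero_iff
    (Metric.isClosed_closedBall.preimage hf).measurableSet).2 (hball _ (by positivity))

end ProbabilityMeasure

lemma isCompact_setOf_mem_and_measure_preimage_singleton_eq_one [T2Space X] [BorelSpace X]
    [HasOuterApproxClosed X] {Y : Type*} [MetricSpace Y] {f : X → Y} (hf : Continuous f)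
    {S : Set (ProbabilityMeasure X)} (hSc : IsClosed S)
    (hSt : IsTightMeasureSet {(P : Measure X) | P ∈ S}) :
    IsCompact {p : ProbabilityMeasure X × Y | p.1 ∈ S ∧ (p.1 : Measure X) (f ⁻¹' {p.2}) = 1} := by
  obtain ⟨L, hL, hSL⟩ := hSt.exists_isCompact_of_measure_preimage_singleton_eq_one hf
  have hS : IsCompact S := hSc.closure_eq ▸ isCompact_closure_of_isTightMeasureSet hSt
  exact (hS.prod hL).of_isClosed_subset
    ((hSc.preimage continuous_fst).inter
      (ProbabilityMeasure.isClosed_setOf_measure_preimage_singleton_eq_one hf))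
    fun p hp => ⟨hp.1, hSL p.1 hp.1 p.2 hp.2⟩

lemma continuous_of_forall_measure_preimage_singleton_eq_one [HasOuterApproxClosed X]
    {Y : Type*} [MetricSpace Y] {f : X → Y} (hf : Continuous f) {T : Set (ProbabilityMeasure X)}
    (hT : IsTightMeasureSet {(P : Measure X) | P ∈ T}) {g : T → Y}
    (hg : ∀ P : T, (P : Measure X) (f ⁻¹' {g P}) = 1) : Continuous g := by
  obtain ⟨L, hL, hTL⟩ := hT.exists_isCompact_of_measure_preimage_singleton_eq_one hf
  refine continuous_of_isClosed_graph_of_isCompact hL (fun P => hTL P P.2 _ (hg P)) ?_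
  have hgraph : {q : T × Y | g q.1 = q.2} =
      (fun q : T × Y => ((q.1 : ProbabilityMeasure X), q.2)) ⁻¹'
        {p | (p.1 : Measure X) (f ⁻¹' {p.2}) = 1} := by
    ext q
    exact ⟨fun h : g q.1 = q.2 => show (q.1 : Measure X) (f ⁻¹' {q.2}) = 1 from h ▸ hg q.1,
      eq_of_measure_preimage_singleton_eq_one hf (hg q.1)⟩
  rw [hgraph]
  exact (ProbabilityMeasure.isClosed_setOf_measure_preimage_singleton_eq_one hf).preimage
    ((continuous_subtype_val.comp continuous_fst).prodMk continuous_snd)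

end LevelSets

section Marginals

variable {ι : Type*} {X : ι → Type*} [∀ i, TopologicalSpace (X i)] [∀ i, MeasurableSpace (X i)]

lemma IsTightMeasureSet.of_forall_map_eval [Fintype ι] {S : Set (Measure (Π i, X i))}
    (hS : ∀ i, IsTightMeasureSet (Measure.map (fun x => x i) '' S)) :
    IsTightMeasureSet S := by
  simp_rw [isTightMeasureSet_iff_exists_isCompact_measure_compl_le] at hS ⊢
  intro ε hε
  have hε' : 0 < ε / Fintype.card ι := ENNReal.div_pos hε.ne' (natCast_ne_top _)
  choose K hK hKS using fun i => hS i _ hε'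
  refine ⟨univ.pi K, isCompact_univ_pi hK, fun P hP => ?_⟩
  calc P (univ.pi K)ᶜ = P (⋃ i, (fun x => x i) ⁻¹' (K i)ᶜ) := by
        congr 1; ext x; simp
    _ ≤ ∑ i, P ((fun x => x i) ⁻¹' (K i)ᶜ) := measure_iUnion_fintype_le _ _
    _ ≤ ∑ _i : ι, ε / Fintype.card ι := Finset.sum_le_sum fun i _ =>
        (Measure.le_map_apply (measurable_pi_apply i).aemeasurable _).trans
          (hKS i _ (mem_image_of_mem _ hP))
    _ ≤ ε := by
        rw [Finset.sum_const, Finset.card_univ, nsmul_eq_mul]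
        exact ENNReal.mul_div_le

variable (μ : ∀ i, Measure (X i))

lemma ProbabilityMeasure.isClosed_setOf_forall_map_eval_eq [∀ i, IsProbabilityMeasure (μ i)]
    [∀ i, HasOuterApproxClosed (X i)] [∀ i, BorelSpace (X i)] [OpensMeasurableSpace (Π i, X i)] :
    IsClosed {P : ProbabilityMeasure (Π i, X i) |
      ∀ i, (P : Measure (Π i, X i)).map (fun x => x i) = μ i} := by
  simp only [ofPred_forall]
  exact isClosed_iInter fun i => isClosed_setOf_map_eq (continuous_apply i) (μ i)

lemma isTightMeasureSet_setOf_forall_map_eval_eq [Fintype ι]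
    (hμ : ∀ i, IsTightMeasureSet {μ i}) :
    IsTightMeasureSet {(P : Measure (Π i, X i)) | P ∈ {P : ProbabilityMeasure (Π i, X i) |
      ∀ i, (P : Measure (Π i, X i)).map (fun x => x i) = μ i}} :=
  IsTightMeasureSet.of_forall_map_eval fun i => (hμ i).subset <| by
    rintro _ ⟨_, ⟨P, hP, rfl⟩, rfl⟩
    exact hP i

end Marginals

end MeasureTheory

theorem stmt7 (n : ℕ) (hn : 0 < n) (μ : Measure ℝ) [IsProbabilityMeasure μ]
    (hCM : ∃ c, IsCompletelyMixable n μ c) :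
    IsCompact {P : ProbabilityMeasure (Fin n → ℝ) |
        (∀ i, (P : Measure (Fin n → ℝ)).map (fun x => x i) = μ) ∧
        ∃ C : ℝ, (P : Measure (Fin n → ℝ)) {x | ∑ i, x i = C} = 1} ∧
    (∃ φ : {P : ProbabilityMeasure (Fin n → ℝ) //
        (∀ i, (P : Measure (Fin n → ℝ)).map (fun x => x i) = μ) ∧
        ∃ C : ℝ, (P : Measure (Fin n → ℝ)) {x | ∑ i, x i = C} = 1} → ℝ,
      Continuous φ ∧
      ∀ P, (P.1 : Measure (Fin n → ℝ)) {x | ∑ i, x i = n * φ P} = 1) ∧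
    {c : ℝ | IsCompletelyMixable n μ c}.Nonempty ∧
    IsCompact {c : ℝ | IsCompletelyMixable n μ c} := by
  have hn' : (n : ℝ) ≠ 0 := by positivity
  have hsum : Continuous fun x : Fin n → ℝ => ∑ i, x i := by fun_prop
  have hMt := isTightMeasureSet_setOf_forall_map_eval_eq (fun _ : Fin n => μ)
    fun _ => isTightMeasureSet_singleton
  set G := {p : ProbabilityMeasure (Fin n → ℝ) × ℝ |
    p.1 ∈ {P : ProbabilityMeasure (Fin n → ℝ) |
      ∀ i, (P : Measure (Fin n → ℝ)).map (fun x => x i) = μ} ∧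
    (p.1 : Measure (Fin n → ℝ)) ((fun x => ∑ i, x i) ⁻¹' {p.2}) = 1}
  have hG : IsCompact G := isCompact_setOf_mem_and_measure_preimage_singleton_eq_one hsum
    (ProbabilityMeasure.isClosed_setOf_forall_map_eval_eq fun _ => μ) hMt
  refine ⟨?_, ⟨fun P => Classical.choose P.2.2 / n, ?_, fun P => ?_⟩, hCM, ?_⟩
  · convert hG.image continuous_fst using 1
    ext P
    exact ⟨fun ⟨hP, C, hC⟩ => ⟨(P, C), ⟨hP, hC⟩, rfl⟩,
      fun ⟨_, ⟨hP, hC⟩, hfst⟩ => hfst ▸ ⟨hP, _, hC⟩⟩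
  · refine Continuous.div_const ?_ _
    exact continuous_of_forall_measure_preimage_singleton_eq_one hsum
      (hMt.subset fun _ ⟨P, hP, h⟩ => ⟨P, hP.1, h⟩) fun P => Classical.choose_spec P.2.2
  · rw [mul_div_cancel₀ _ hn']
    exact Classical.choose_spec P.2.2
  · convert (Homeomorph.mulLeft₀ (n : ℝ) hn').isCompact_preimage.2 (hG.image continuous_snd) using 1
    ext c
    exact ⟨fun ⟨P, hP, hm, hc⟩ => ⟨(⟨P, hP⟩, n * c), ⟨hm, hc⟩, rfl⟩,
      fun ⟨⟨P, _⟩, ⟨hm, hC⟩, rfl⟩ => ⟨P, P.2, hm, hC⟩⟩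
end

section
/- If (μ₁,…,μₙ) is a jointly mixable n-tuple of Borel probability measures on ℝ and each μᵢ is discrete (i.e., supported on a countable set), then the set of centers of (μ₁,…,μₙ) is finite. -/
/-!
A discrete probability measure on ℝ puts all but an arbitrarily small mass on a finite set, so
one can choose finite sets `F i` whose complements have total `μ i`-mass below `1`. A joint mix
`P` with center `C` is carried by the hyperplane `∑ xᵢ = C`, and by the union bound `P` gives mass
`< 1` to the points having some coordinate outside its `F i`; hence the hyperplane meets
`∏ F i`, i.e. `C` is a sum `∑ xᵢ` with `xᵢ ∈ F i`. These sums form a finite set independent of `C`.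
-/

open MeasureTheory ENNReal

lemma exists_finset_measure_compl_lt {α : Type*} [MeasurableSpace α] [MeasurableSingletonClass α]
    (μ : Measure α) [IsFiniteMeasure μ] {s : Set α} (hs : s.Countable) (hμs : μ sᶜ = 0)
    {ε : ℝ≥0∞} (hε : 0 < ε) : ∃ F : Finset α, μ (↑F)ᶜ < ε := by
  have : Countable s := hs.to_subtype
  let U : Finset s → Set α := fun F => (F.map (.subtype _) : Set α)ᶜ
  have hU : Antitone U := fun F G h => Set.compl_subset_compl.2 (by simpa using h)
  have hInter : ⋂ F, U F = sᶜ := by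
    simp only [U, ← Set.compl_iUnion, compl_inj_iff]
    ext x
    simp only [Set.mem_iUnion, Finset.coe_map, Function.Embedding.coe_subtype, Set.mem_image,
      Finset.mem_coe]
    exact ⟨fun ⟨F, y, _, hy⟩ => hy ▸ y.2, fun hx => ⟨{⟨x, hx⟩}, ⟨x, hx⟩, by simp, rfl⟩⟩
  have hlim := tendsto_measure_iInter_atTop
    (fun F => (Finset.measurableSet _).compl.nullMeasurableSet) hU ⟨∅, measure_ne_top μ _⟩
  rw [hInter, hμs] at hlim
  obtain ⟨F, hF⟩ := (hlim.eventually (gt_mem_nhds hε)).exists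
  exact ⟨_, hF⟩

lemma IsJointMix.mem_image_sum_piFinset {n : ℕ} {μ : Fin n → Measure ℝ} {C : ℝ}
    (h : IsJointMix n μ C) (F : Fin n → Finset ℝ) (hF : ∑ i, μ i (F i)ᶜ < 1) :
    C ∈ (Fintype.piFinset F).image (fun x => ∑ i, x i) := by
  obtain ⟨P, -, hmarg, hC⟩ := h
  by_contra hnot
  have hsub : {x : Fin n → ℝ | ∑ i, x i = C} ⊆ ⋃ i, (fun x => x i) ⁻¹' (F i : Set ℝ)ᶜ := by
    intro x hx
    simp only [Finset.mem_image, Fintype.mem_piFinset, not_exists, not_and] at hnot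
    simpa [not_forall] using mt (hnot x) (not_not.2 hx)
  have hpre : ∀ i, P ((fun x => x i) ⁻¹' (F i : Set ℝ)ᶜ) = μ i (F i)ᶜ := fun i => by
    rw [← hmarg i, Measure.map_apply (measurable_pi_apply i) (Finset.measurableSet _).compl]
  refine lt_irrefl (1 : ℝ≥0∞) ?_
  calc 1 = P {x | ∑ i, x i = C} := hC.symm
    _ ≤ ∑ i, P ((fun x => x i) ⁻¹' (F i : Set ℝ)ᶜ) :=
      (measure_mono hsub).trans (measure_iUnion_fintype_le _ _)
    _ = ∑ i, μ i (F i)ᶜ := Finset.sum_congr rfl fun i _ => hpre i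
    _ < 1 := hF

theorem stmt8_general (n : ℕ) (μ : Fin n → Measure ℝ) (hprob : ∀ i, IsProbabilityMeasure (μ i))
    (hdisc : ∀ i, ∃ s : Set ℝ, s.Countable ∧ μ i sᶜ = 0) :
    {C : ℝ | IsJointMix n μ C}.Finite := by
  obtain ⟨ε, hε_pos, hε_sum⟩ := ENNReal.exists_pos_sum_of_countable' one_ne_zero (Fin n)
  have hF : ∀ i, ∃ F : Finset ℝ, μ i (F : Set ℝ)ᶜ < ε i := fun i => by
    obtain ⟨s, hs, hμs⟩ := hdisc i
    exact exists_finset_measure_compl_lt (μ i) hs hμs (hε_pos i)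
  choose F hF using hF
  have hsum : ∑ i, μ i (F i)ᶜ < 1 :=
    calc ∑ i, μ i (F i)ᶜ ≤ ∑ i, ε i := Finset.sum_le_sum fun i _ => (hF i).le
      _ ≤ ∑' i, ε i := ENNReal.sum_le_tsum _
      _ < 1 := hε_sum
  exact ((Fintype.piFinset F).image _).finite_toSet.subset
    fun C hC => IsJointMix.mem_image_sum_piFinset hC F hsum

theorem stmt8 (n : ℕ) (μ : Fin n → Measure ℝ) (hprob : ∀ i, IsProbabilityMeasure (μ i))
    (hdisc : ∀ i, ∃ s : Set ℝ, s.Countable ∧ μ i sᶜ = 0)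
    (hJM : ∃ C, IsJointMix n μ C) :
    {C : ℝ | IsJointMix n μ C}.Finite :=
  stmt8_general n μ hprob hdisc
end

section
/- Suppose the n-tuple (μ₁,…,μₙ) of Borel probability measures on ℝ is jointly mixable with center C. Then for any β₁,…,βₙ ∈ (0,1) with β := β₁ + ⋯ + βₙ < 1, the following inequalities hold: Σᵢ R_{[βᵢ, 1−β+βᵢ]}(μᵢ) ≤ C ≤ Σᵢ R_{[β−βᵢ, 1−βᵢ]}(μᵢ). -/
open MeasureTheory ENNReal

/-- The quantile function of a probability measure on ℝ. -/
noncomputable def quantile (μ : Measure ℝ) (t : ℝ) : ℝ :=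
  sInf {x : ℝ | t ≤ (μ (Set.Iic x)).toReal}

/-- The average quantile functional `R_{[a,b]}(μ)`. -/
noncomputable def avgQuantile (μ : Measure ℝ) (a b : ℝ) : ℝ :=
  (b - a)⁻¹ * ∫ t in a..b, quantile μ t

/-!
Take a coupling `P` witnessing joint mixability and append an independent uniform coordinate,
which allows atoms to be split. For the lower bound, pick for every `i` an event `Aᵢ` of
probability exactly `βᵢ` with `{Xᵢ < kᵢ} ⊆ Aᵢ ⊆ {Xᵢ ≤ kᵢ}`, where `kᵢ` is the `βᵢ`-quantile of
`μᵢ`, and then an event `D` of probability exactly `1 - β` avoiding every `Aᵢ`. On `D` each `Xᵢ`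
lies above `kᵢ`, and outside `D ∪ Aᵢ` there is only mass `1 - (1 - β + βᵢ)`; comparing tails via
the layer cake formula gives `∫_{[βᵢ, 1-β+βᵢ]} q_{μᵢ} ≤ ∫_D Xᵢ`. Summing over `i` and using
`∑ Xᵢ = C` on `D` yields `(1 - β) ∑ᵢ R_{[βᵢ, 1-β+βᵢ]}(μᵢ) ≤ (1 - β) C`. The upper bound is the
mirror image, with upper tail events.
-/

open ProbabilityTheory Set Filter

section Quantile

variable {μ : Measure ℝ} {t x : ℝ}

lemma bddBelow_setOf_le_cdf (ht : 0 < t) : BddBelow {x | t ≤ cdf μ x} := by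
  obtain ⟨x₀, hx₀⟩ := eventually_atBot.1 ((tendsto_cdf_atBot μ).eventually_lt_const ht)
  exact ⟨x₀, fun x hx => not_lt.1 fun hlt => (hx₀ x hlt.le).not_ge hx⟩

lemma nonempty_setOf_le_cdf (ht : t < 1) : {x | t ≤ cdf μ x}.Nonempty :=
  ((tendsto_cdf_atTop μ).eventually_const_lt ht).exists.imp fun _ => le_of_lt

variable [IsProbabilityMeasure μ]

lemma quantile_eq_sInf_cdf (t : ℝ) : quantile μ t = sInf {x | t ≤ cdf μ x} := by
  simp only [quantile, cdf_eq_real, measureReal_def]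

lemma le_cdf_quantile (ht1 : t < 1) : t ≤ cdf μ (quantile μ t) := by
  rw [quantile_eq_sInf_cdf]
  refine ge_of_tendsto (((cdf μ).right_continuous _).mono Ioi_subset_Ici_self)
    (eventually_nhdsWithin_of_forall fun y hy => ?_)
  obtain ⟨x, hx, hxy⟩ := exists_lt_of_csInf_lt (nonempty_setOf_le_cdf ht1) hy
  exact hx.trans (monotone_cdf μ hxy.le)

lemma quantile_le_iff (ht0 : 0 < t) (ht1 : t < 1) : quantile μ t ≤ x ↔ t ≤ cdf μ x :=
  ⟨fun h => (le_cdf_quantile ht1).trans (monotone_cdf μ h),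
    fun h => (quantile_eq_sInf_cdf t).trans_le (csInf_le (bddBelow_setOf_le_cdf ht0) h)⟩

lemma monotoneOn_quantile : MonotoneOn (quantile μ) (Ioo 0 1) := fun _ hs _ ht hst =>
  (quantile_le_iff hs.1 hs.2).2 (hst.trans (le_cdf_quantile ht.2))

lemma measureReal_Iio_quantile_le (ht0 : 0 < t) (ht1 : t < 1) :
    μ.real (Iio (quantile μ t)) ≤ t := by
  have h := (cdf μ).measure_Iio (tendsto_cdf_atBot μ) (quantile μ t)
  rw [measure_cdf] at h
  rw [measureReal_def, h, sub_zero, ENNReal.toReal_ofReal', (monotone_cdf μ).leftLim_eq_sSup]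
  refine max_le (csSup_le (nonempty_Iio.image _) ?_) ht0.le
  rintro _ ⟨x, hx, rfl⟩
  exact (not_le.1 fun h => (not_le.2 hx) ((quantile_le_iff ht0 ht1).2 h)).le

lemma le_measureReal_Iio_of_quantile_lt {s : ℝ} (ht1 : t < 1) (hts : quantile μ t < s) :
    t ≤ μ.real (Iio s) :=
  calc t ≤ cdf μ (quantile μ t) := le_cdf_quantile ht1
    _ = μ.real (Iic (quantile μ t)) := cdf_eq_real μ _
    _ ≤ μ.real (Iio s) := measureReal_mono (Iic_subset_Iio.2 hts)

lemma volume_real_inter_lt_quantile_le {a b : ℝ} (ha : 0 ≤ a) (hb : b ≤ 1) (s : ℝ) :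
    volume.real ({t | s < quantile μ t} ∩ Ioo a b) ≤ max (b - cdf μ s) 0 := by
  rw [← Real.volume_real_Ioo]
  refine measureReal_mono (fun t ⟨hst, ht⟩ => ⟨?_, ht.2⟩) measure_Ioo_lt_top.ne
  by_contra! h
  exact (not_le.2 hst) ((quantile_le_iff (ha.trans_lt ht.1) (ht.2.trans_le hb)).2 h)

lemma volume_real_inter_quantile_lt_le {a b : ℝ} (hb : b ≤ 1) (s : ℝ) :
    volume.real ({t | quantile μ t < s} ∩ Ioo a b) ≤ max (μ.real (Iio s) - a) 0 := by
  rw [← Real.volume_real_Ioc]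
  refine measureReal_mono (fun t ⟨hts, ht⟩ => ⟨ht.1, ?_⟩) measure_Ioc_lt_top.ne
  exact le_measureReal_Iio_of_quantile_lt (ht.2.trans_le hb) hts

end Quantile

section Dominance

variable {α β : Type*} [MeasurableSpace α] [MeasurableSpace β] {μ : Measure α} {ν : Measure β}
  [IsFiniteMeasure μ] [IsFiniteMeasure ν] {f : α → ℝ} {g : β → ℝ} {k : ℝ}

theorem integral_le_integral_of_upper_tail_le (hf : AEMeasurable f μ) (hg : Integrable g ν)
    (hfk : ∀ᵐ x ∂μ, k ≤ f x) (hgk : ∀ᵐ y ∂ν, k ≤ g y) (hmass : μ univ = ν univ)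
    (htail : ∀ s, k < s → μ.real {x | s < f x} ≤ ν.real {y | s < g y}) :
    Integrable f μ ∧ ∫ x, f x ∂μ ≤ ∫ y, g y ∂ν := by
  have hf₀ : 0 ≤ᵐ[μ] fun x => f x - k := hfk.mono fun x hx => sub_nonneg.2 hx
  have hg₀ : 0 ≤ᵐ[ν] fun y => g y - k := hgk.mono fun y hy => sub_nonneg.2 hy
  have hgk_int : Integrable (fun y => g y - k) ν := hg.sub (integrable_const k)
  have hlint : ∫⁻ x, ENNReal.ofReal (f x - k) ∂μ ≤ ∫⁻ y, ENNReal.ofReal (g y - k) ∂ν := by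
    rw [lintegral_eq_lintegral_meas_lt μ hf₀ (hf.sub_const k),
      lintegral_eq_lintegral_meas_lt ν hg₀ hgk_int.aemeasurable]
    refine setLIntegral_mono' measurableSet_Ioi fun s hs => ?_
    simp only [lt_sub_iff_add_lt']
    exact (ENNReal.toReal_le_toReal (measure_ne_top _ _) (measure_ne_top _ _)).1
      (htail _ (lt_add_of_pos_right k hs))
  have hfk_int : Integrable (fun x => f x - k) μ :=
    ⟨(hf.sub_const k).aestronglyMeasurable, (hasFiniteIntegral_iff_ofReal hf₀).2
      (hlint.trans_lt hgk_int.lintegral_lt_top)⟩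
  have hf_int : Integrable f μ :=
    (hfk_int.add (integrable_const k)).congr (.of_forall fun x => sub_add_cancel (f x) k)
  have hint : ∫ x, (f x - k) ∂μ ≤ ∫ y, (g y - k) ∂ν := by
    rw [integral_eq_lintegral_of_nonneg_ae hf₀ hfk_int.aestronglyMeasurable,
      integral_eq_lintegral_of_nonneg_ae hg₀ hgk_int.aestronglyMeasurable]
    exact ENNReal.toReal_mono (hgk_int.lintegral_lt_top.ne) hlint
  rw [integral_sub hf_int (integrable_const k), integral_sub hg (integrable_const k),
    integral_const, integral_const, measureReal_def, measureReal_def, hmass] at hint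
  exact ⟨hf_int, by linarith⟩

theorem integral_le_integral_of_lower_tail_le (hf : Integrable f μ) (hg : AEMeasurable g ν)
    (hfk : ∀ᵐ x ∂μ, f x ≤ k) (hgk : ∀ᵐ y ∂ν, g y ≤ k) (hmass : μ univ = ν univ)
    (htail : ∀ s, s < k → ν.real {y | g y < s} ≤ μ.real {x | f x < s}) :
    Integrable g ν ∧ ∫ x, f x ∂μ ≤ ∫ y, g y ∂ν := by
  obtain ⟨hg_int, hle⟩ := integral_le_integral_of_upper_tail_le (f := fun y => -g y)
    (g := fun x => -f x) (k := -k) hg.neg hf.neg (hgk.mono fun _ h => neg_le_neg h)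
    (hfk.mono fun _ h => neg_le_neg h) hmass.symm
    fun s hs => by simpa only [lt_neg] using htail (-s) (neg_lt.1 hs)
  rw [integral_neg, integral_neg, neg_le_neg_iff] at hle
  exact ⟨hg_int.neg.congr (.of_forall fun y => neg_neg (g y)), hle⟩

end Dominance

lemma measureReal_preimage_of_map_eq {Ω : Type*} [MeasurableSpace Ω] {ρ : Measure Ω}
    {X : Ω → ℝ} {μ : Measure ℝ} (hX : Measurable X) (hlaw : ρ.map X = μ) {s : Set ℝ}
    (hs : MeasurableSet s) : ρ.real (X ⁻¹' s) = μ.real s := by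
  rw [← hlaw, map_measureReal_apply hX hs]

section Coordinate

variable {Ω : Type*} [MeasurableSpace Ω] {ρ : Measure Ω} [IsProbabilityMeasure ρ]

lemma measureReal_le_inter_add_of_disjoint {A D E : Set Ω} (hA : MeasurableSet A)
    (hD : MeasurableSet D) (hAD : Disjoint A D) (hEA : Disjoint E A) :
    ρ.real E ≤ ρ.real (E ∩ D) + (1 - ρ.real A - ρ.real D) := by
  have hsub : E ⊆ (E ∩ D) ∪ (A ∪ D)ᶜ := fun ω hω => by
    by_cases hωD : ω ∈ D
    · exact Or.inl ⟨hω, hωD⟩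
    · exact Or.inr fun h => h.elim (hEA.notMem_of_mem_left hω) hωD
  rw [sub_sub, ← measureReal_union hAD hD, ← probReal_compl_eq_one_sub (hA.union hD)]
  exact (measureReal_mono hsub).trans (measureReal_union_le _ _)

variable {X : Ω → ℝ} {μ : Measure ℝ} [IsProbabilityMeasure μ] {A D : Set Ω} {a b k : ℝ}

theorem integral_quantile_le_setIntegral (hX : Measurable X) (hlaw : ρ.map X = μ)
    (hA : MeasurableSet A) (hD : MeasurableSet D) (hAD : Disjoint A D)
    (hXA : {ω | X ω < k} ⊆ A) (hAX : A ⊆ {ω | X ω ≤ k}) (hρA : ρ.real A = a)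
    (hρD : ρ.real D = b - a) (ha : 0 ≤ a) (hb : b ≤ 1) (hXD : IntegrableOn X D ρ) :
    IntegrableOn (quantile μ) (Ioo a b) ∧ ∫ t in Ioo a b, quantile μ t ≤ ∫ ω in D, X ω ∂ρ := by
  have hkD : ∀ ω ∈ D, k ≤ X ω := fun ω hω =>
    not_lt.1 fun h => hAD.notMem_of_mem_right hω (hXA h)
  have hkq : ∀ t ∈ Ioo a b, k ≤ quantile μ t := fun t ht => not_lt.1 fun h => by
    have := le_measureReal_Iio_of_quantile_lt (ht.2.trans_le hb) h
    rw [← measureReal_preimage_of_map_eq hX hlaw measurableSet_Iio] at this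
    exact (this.trans ((measureReal_mono hXA).trans hρA.le)).not_gt ht.1
  refine integral_le_integral_of_upper_tail_le (k := k)
    (aemeasurable_restrict_of_monotoneOn measurableSet_Ioo
      (monotoneOn_quantile.mono (Ioo_subset_Ioo ha hb)))
    hXD (ae_restrict_of_forall_mem measurableSet_Ioo hkq) (ae_restrict_of_forall_mem hD hkD)
    ?_ fun s hs => ?_
  · rw [Measure.restrict_apply_univ, Measure.restrict_apply_univ, Real.volume_Ioo, ← hρD,
      ofReal_measureReal]
  · rw [measureReal_restrict_apply' measurableSet_Ioo, measureReal_restrict_apply' hD]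
    have hEA : Disjoint {ω | s < X ω} A :=
      disjoint_left.2 fun ω hω hωA => (hs.trans hω).not_ge (hAX hωA)
    have htail := measureReal_le_inter_add_of_disjoint (ρ := ρ) hA hD hAD hEA
    have hcdf : ρ.real {ω | s < X ω} = 1 - cdf μ s := by
      rw [cdf_eq_real, ← measureReal_preimage_of_map_eq hX hlaw measurableSet_Iic,
        ← probReal_compl_eq_one_sub (μ := ρ) (hX measurableSet_Iic)]
      congr 1
      ext ω
      simp
    refine (volume_real_inter_lt_quantile_le ha hb s).trans (max_le ?_ measureReal_nonneg)
    linarith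

theorem setIntegral_le_integral_quantile (hX : Measurable X) (hlaw : ρ.map X = μ)
    (hA : MeasurableSet A) (hD : MeasurableSet D) (hAD : Disjoint A D)
    (hXA : {ω | k < X ω} ⊆ A) (hAX : A ⊆ {ω | k ≤ X ω}) (hρA : ρ.real A = 1 - b)
    (hρD : ρ.real D = b - a) (ha : 0 ≤ a) (hb : b ≤ 1) (hXD : IntegrableOn X D ρ) :
    IntegrableOn (quantile μ) (Ioo a b) ∧ ∫ ω in D, X ω ∂ρ ≤ ∫ t in Ioo a b, quantile μ t := by
  have hkD : ∀ ω ∈ D, X ω ≤ k := fun ω hω =>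
    not_lt.1 fun h => hAD.notMem_of_mem_right hω (hXA h)
  have hqk : ∀ t ∈ Ioo a b, quantile μ t ≤ k := fun t ht => by
    refine (quantile_le_iff (ha.trans_lt ht.1) (ht.2.trans_le hb)).2 ?_
    have hcompl : (X ⁻¹' Iic k)ᶜ ⊆ A := fun ω (hω : ¬ X ω ≤ k) => hXA (not_le.1 hω)
    have := measureReal_mono (μ := ρ) hcompl
    rw [probReal_compl_eq_one_sub (hX measurableSet_Iic),
      measureReal_preimage_of_map_eq hX hlaw measurableSet_Iic] at this
    rw [cdf_eq_real]
    linarith [ht.2]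
  refine integral_le_integral_of_lower_tail_le (k := k) hXD
    (aemeasurable_restrict_of_monotoneOn measurableSet_Ioo
      (monotoneOn_quantile.mono (Ioo_subset_Ioo ha hb)))
    (ae_restrict_of_forall_mem hD hkD) (ae_restrict_of_forall_mem measurableSet_Ioo hqk)
    ?_ fun s hs => ?_
  · rw [Measure.restrict_apply_univ, Measure.restrict_apply_univ, Real.volume_Ioo, ← hρD,
      ofReal_measureReal]
  · rw [measureReal_restrict_apply' measurableSet_Ioo, measureReal_restrict_apply' hD]
    have hEA : Disjoint {ω | X ω < s} A :=
      disjoint_left.2 fun ω hω hωA => (hω.trans hs).not_ge (hAX hωA)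
    have htail := measureReal_le_inter_add_of_disjoint (ρ := ρ) hA hD hAD hEA
    have hIio : ρ.real {ω | X ω < s} = μ.real (Iio s) :=
      measureReal_preimage_of_map_eq hX hlaw measurableSet_Iio
    refine (volume_real_inter_quantile_lt_le hb s).trans (max_le ?_ measureReal_nonneg)
    linarith

end Coordinate

section Randomization

noncomputable def unitUniform : Measure ℝ := volume.restrict (Icc 0 1)

instance : IsProbabilityMeasure unitUniform := ⟨by simp [unitUniform]⟩

variable {α : Type*} [MeasurableSpace α] {P : Measure α}

lemma unitUniform_Iic_zero : unitUniform (Iic 0) = 0 := by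
  rw [unitUniform, Measure.restrict_apply measurableSet_Iic]
  exact measure_mono_null (fun x hx => le_antisymm hx.1 hx.2.1) Real.volume_singleton

lemma unitUniform_Ioi_one : unitUniform (Ioi 1) = 0 := by
  rw [unitUniform, Measure.restrict_apply measurableSet_Ioi]
  exact measure_mono_null (fun x hx => (not_le.2 hx.1 hx.2.2).elim) measure_empty

variable {α : Type*} [MeasurableSpace α] {P : Measure α}

lemma prod_unitUniform_preimage_snd (B : Set ℝ) :
    P.prod unitUniform (Prod.snd ⁻¹' B) = P univ * unitUniform B := by
  rw [← univ_prod, Measure.prod_prod]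

lemma measureReal_prod_unitUniform_snd_Ioc_le (r r' : ℝ) :
    (P.prod unitUniform).real (Prod.snd ⁻¹' Ioc r r') ≤ P.real univ * dist r' r := by
  rw [measureReal_def, prod_unitUniform_preimage_snd, ENNReal.toReal_mul]
  refine mul_le_mul_of_nonneg_left ?_ ENNReal.toReal_nonneg
  calc (unitUniform (Ioc r r')).toReal ≤ volume.real (Ioc r r') :=
        ENNReal.toReal_mono measure_Ioc_lt_top.ne (Measure.restrict_apply_le _ _)
    _ ≤ dist r' r := by
        rw [Real.volume_real_Ioc, Real.dist_eq]
        exact max_le (le_abs_self _) (abs_nonneg _)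

/-- The mass of `E \ S` swept up to level `r` of the uniform coordinate is Lipschitz in `r`,
so the intermediate value theorem hits every mass between those of `S` and `E`. -/
theorem exists_measurableSet_between_prod_unitUniform_eq [IsFiniteMeasure P] {S E : Set (α × ℝ)}
    (hS : MeasurableSet S) (hE : MeasurableSet E) (hSE : S ⊆ E) {m : ℝ}
    (hSm : (P.prod unitUniform).real S ≤ m) (hmE : m ≤ (P.prod unitUniform).real E) :
    ∃ D, MeasurableSet D ∧ S ⊆ D ∧ D ⊆ E ∧ (P.prod unitUniform).real D = m := by
  set ρ := P.prod unitUniform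
  set D : ℝ → Set (α × ℝ) := fun r => S ∪ (E ∩ Prod.snd ⁻¹' Iic r)
  have hDmeas : ∀ r, MeasurableSet (D r) := fun r =>
    hS.union (hE.inter (measurable_snd measurableSet_Iic))
  have hDE : ∀ r, D r ⊆ E := fun r => union_subset hSE inter_subset_left
  have hlip : ∀ r' r, ρ.real (D r') ≤ ρ.real (D r) + P.real univ * dist r' r := fun r' r => by
    have hsub : D r' ⊆ D r ∪ Prod.snd ⁻¹' Ioc r r' := by
      rintro p (hp | ⟨hpE, hp⟩)
      · exact Or.inl (Or.inl hp)
      · by_cases hpr : p.2 ≤ r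
        · exact Or.inl (Or.inr ⟨hpE, hpr⟩)
        · exact Or.inr ⟨not_le.1 hpr, hp⟩
    calc ρ.real (D r') ≤ ρ.real (D r) + ρ.real (Prod.snd ⁻¹' Ioc r r') :=
          (measureReal_mono hsub).trans (measureReal_union_le _ _)
      _ ≤ ρ.real (D r) + P.real univ * dist r' r := by
          gcongr; exact measureReal_prod_unitUniform_snd_Ioc_le r r'
  have hcont : Continuous fun r => ρ.real (D r) :=
    (LipschitzWith.of_le_add_mul' _ hlip).continuous
  have h0 : ρ.real (D 0) = ρ.real S := by
    have hnull : ρ (Prod.snd ⁻¹' Iic 0) = 0 := by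
      rw [prod_unitUniform_preimage_snd, unitUniform_Iic_zero, mul_zero]
    exact measureReal_congr (union_ae_eq_left_of_ae_eq_empty
      (ae_eq_empty.2 (measure_mono_null inter_subset_right hnull)))
  have h1 : ρ.real (D 1) = ρ.real E := by
    have hnull : ρ (Prod.snd ⁻¹' Ioi 1) = 0 := by
      rw [prod_unitUniform_preimage_snd, unitUniform_Ioi_one, mul_zero]
    refine measureReal_congr (ae_eq_set.2 ⟨by rw [sdiff_eq_empty.2 (hDE 1),
      measure_empty], measure_mono_null (fun p ⟨hpE, hp⟩ => ?_) hnull⟩)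
    exact not_le.1 fun h => hp (Or.inr ⟨hpE, (h : p.2 ≤ 1)⟩)
  obtain ⟨r, -, hr⟩ := intermediate_value_Icc zero_le_one hcont.continuousOn
    (show m ∈ Icc (ρ.real (D 0)) (ρ.real (D 1)) by rw [h0, h1]; exact ⟨hSm, hmE⟩)
  exact ⟨D r, hDmeas r, subset_union_left, hDE r, hr⟩

end Randomization

section TailEvents

variable {α : Type*} [MeasurableSpace α] {P : Measure α} [IsProbabilityMeasure P]
  {X : α × ℝ → ℝ} {μ : Measure ℝ} [IsProbabilityMeasure μ] {β : ℝ}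

lemma exists_lower_tail_event (hX : Measurable X) (hlaw : (P.prod unitUniform).map X = μ)
    (hβ : β ∈ Ioo 0 1) :
    ∃ A, MeasurableSet A ∧ {p | X p < quantile μ β} ⊆ A ∧ A ⊆ {p | X p ≤ quantile μ β} ∧
      (P.prod unitUniform).real A = β := by
  exact exists_measurableSet_between_prod_unitUniform_eq
    (hX measurableSet_Iio) (hX measurableSet_Iic) (preimage_mono Iio_subset_Iic_self) (m := β)
    (by
      rw [measureReal_preimage_of_map_eq hX hlaw measurableSet_Iio]
      exact measureReal_Iio_quantile_le hβ.1 hβ.2)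
    (by
      rw [measureReal_preimage_of_map_eq hX hlaw measurableSet_Iic, ← cdf_eq_real]
      exact le_cdf_quantile hβ.2)

lemma exists_upper_tail_event (hX : Measurable X) (hlaw : (P.prod unitUniform).map X = μ)
    (hβ : β ∈ Ioo 0 1) :
    ∃ A, MeasurableSet A ∧ {p | quantile μ (1 - β) < X p} ⊆ A ∧
      A ⊆ {p | quantile μ (1 - β) ≤ X p} ∧ (P.prod unitUniform).real A = β := by
  have h0 : 0 < 1 - β := sub_pos.2 hβ.2
  have h1 : 1 - β < 1 := sub_lt_self 1 hβ.1
  exact exists_measurableSet_between_prod_unitUniform_eq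
    (hX measurableSet_Ioi) (hX measurableSet_Ici) (preimage_mono Ioi_subset_Ici_self) (m := β)
    (by
      rw [measureReal_preimage_of_map_eq hX hlaw measurableSet_Ioi, ← compl_Iic,
        probReal_compl_eq_one_sub measurableSet_Iic, ← cdf_eq_real]
      linarith [le_cdf_quantile (μ := μ) h1])
    (by
      rw [measureReal_preimage_of_map_eq hX hlaw measurableSet_Ici, ← compl_Iio,
        probReal_compl_eq_one_sub measurableSet_Iio]
      linarith [measureReal_Iio_quantile_le (μ := μ) h0 h1])

omit [IsProbabilityMeasure μ] in
lemma exists_disjoint_prod_unitUniform_eq {ι : Type*} [Fintype ι] {A : ι → Set (α × ℝ)}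
    (hA : ∀ i, MeasurableSet (A i)) (hsum : ∑ i, (P.prod unitUniform).real (A i) ≤ 1) :
    ∃ D, MeasurableSet D ∧ (∀ i, Disjoint (A i) D) ∧
      (P.prod unitUniform).real D = 1 - ∑ i, (P.prod unitUniform).real (A i) := by
  obtain ⟨D, hD, -, hDE, hρD⟩ := exists_measurableSet_between_prod_unitUniform_eq (P := P)
    MeasurableSet.empty (MeasurableSet.iUnion hA).compl (empty_subset _)
    (m := 1 - ∑ i, (P.prod unitUniform).real (A i)) (by simpa using hsum)
    (by
      rw [probReal_compl_eq_one_sub (μ := P.prod unitUniform) (MeasurableSet.iUnion hA)]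
      linarith [measureReal_iUnion_fintype_le (μ := P.prod unitUniform) A])
  exact ⟨D, hD, fun i => disjoint_left.2 fun p hp hpD => hDE hpD (mem_iUnion_of_mem i hp), hρD⟩

end TailEvents

section JointMix

lemma integrable_of_le_of_sum_eq {Ω ι : Type*} [MeasurableSpace Ω] [Fintype ι] {ρ : Measure Ω}
    [IsFiniteMeasure ρ] {f : ι → Ω → ℝ} {k : ι → ℝ} {c : ℝ}
    (hf : ∀ i, AEStronglyMeasurable (f i) ρ) (hk : ∀ᵐ ω ∂ρ, ∀ i, k i ≤ f i ω)
    (hsum : ∀ᵐ ω ∂ρ, ∑ i, f i ω = c) (i : ι) : Integrable (f i) ρ := by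
  refine Integrable.of_bound (hf i) (|k i| + |c - ∑ j, k j|) ?_
  filter_upwards [hk, hsum] with ω hkω hω
  have hle : f i ω - k i ≤ c - ∑ j, k j := by
    rw [← hω, ← Finset.sum_sub_distrib]
    exact Finset.single_le_sum (f := fun j => f j ω - k j) (fun j _ => sub_nonneg.2 (hkω j))
      (Finset.mem_univ i)
  rw [Real.norm_eq_abs, abs_le]
  constructor <;> linarith [neg_abs_le (k i), le_abs_self (k i), le_abs_self (c - ∑ j, k j), hkω i]

lemma sum_setIntegral_eq_of_sum_eq {Ω ι : Type*} [MeasurableSpace Ω] [Fintype ι] {ρ : Measure Ω}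
    {f : ι → Ω → ℝ} {c : ℝ} {D : Set Ω} (hsum : ∀ᵐ ω ∂ρ, ∑ i, f i ω = c)
    (hint : ∀ i, IntegrableOn (f i) D ρ) : ∑ i, ∫ ω in D, f i ω ∂ρ = ρ.real D * c := by
  rw [← integral_finsetSum _ fun i _ => hint i, integral_congr_ae (ae_restrict_of_ae hsum),
    setIntegral_const, smul_eq_mul]

lemma avgQuantile_eq_integral_Ioo (μ : Measure ℝ) {a b : ℝ} (hab : a ≤ b) :
    avgQuantile μ a b = (b - a)⁻¹ * ∫ t in Ioo a b, quantile μ t := by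
  rw [avgQuantile, intervalIntegral.integral_of_le hab, integral_Ioc_eq_integral_Ioo]

variable {n : ℕ} {μ : Fin n → Measure ℝ} {C : ℝ} {P : Measure (Fin n → ℝ)}

lemma map_coord_prod_unitUniform (hP : ∀ i, P.map (fun x => x i) = μ i) (i : Fin n) :
    (P.prod unitUniform).map (fun p => p.1 i) = μ i := by
  rw [← hP i, show (fun p : (Fin n → ℝ) × ℝ => p.1 i) = (fun x => x i) ∘ Prod.fst from rfl,
    ← Measure.map_map (measurable_pi_apply i) measurable_fst, Measure.map_fst_prod, measure_univ,
    one_smul]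

lemma ae_sum_coord_prod_unitUniform [IsProbabilityMeasure P] (hC : P {x | ∑ i, x i = C} = 1) :
    ∀ᵐ p ∂(P.prod unitUniform), ∑ i, p.1 i = C := by
  have hP : ∀ᵐ x ∂P, ∑ i, x i = C :=
    (mem_ae_iff_prob_eq_one (measurableSet_eq_fun (by fun_prop) measurable_const)).2 hC
  refine ae_of_ae_map (p := fun x : Fin n → ℝ => ∑ i, x i = C) measurable_fst.aemeasurable ?_
  rwa [Measure.map_fst_prod, measure_univ, one_smul]

variable [∀ i, IsProbabilityMeasure (μ i)] {β : Fin n → ℝ}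

theorem IsJointMix.sum_avgQuantile_le (hJM : IsJointMix n μ C) (hβ : ∀ i, β i ∈ Ioo 0 1)
    (hsum : ∑ i, β i < 1) : ∑ i, avgQuantile (μ i) (β i) (1 - ∑ j, β j + β i) ≤ C := by
  obtain ⟨P, hP, hmarg, hC⟩ := hJM
  set B := ∑ j, β j
  have hX : ∀ i, Measurable fun p : (Fin n → ℝ) × ℝ => p.1 i :=
    fun i => (measurable_pi_apply i).comp measurable_fst
  have hβB : ∀ i, β i ≤ B := fun i =>
    Finset.single_le_sum (fun j _ => (hβ j).1.le) (Finset.mem_univ i)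
  choose A hA hXA hAX hρA using fun i =>
    exists_lower_tail_event (hX i) (map_coord_prod_unitUniform hmarg i) (hβ i)
  obtain ⟨D, hD, hAD, hρD⟩ := exists_disjoint_prod_unitUniform_eq (P := P) hA
    (by simpa [hρA] using hsum.le)
  simp only [hρA] at hρD
  have hkD : ∀ᵐ p ∂(P.prod unitUniform).restrict D, ∀ i, quantile (μ i) (β i) ≤ p.1 i :=
    ae_restrict_of_forall_mem hD fun p hp i =>
      not_lt.1 fun h => (hAD i).notMem_of_mem_right hp (hXA i h)
  have hsumC := ae_sum_coord_prod_unitUniform hC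
  have hint := integrable_of_le_of_sum_eq (fun i => (hX i).aestronglyMeasurable) hkD
    (ae_restrict_of_ae hsumC)
  have hcmp : ∀ i, ∫ t in Ioo (β i) (1 - B + β i), quantile (μ i) t ≤
      ∫ p in D, p.1 i ∂(P.prod unitUniform) := fun i =>
    (integral_quantile_le_setIntegral (hX i) (map_coord_prod_unitUniform hmarg i) (hA i) hD
      (hAD i) (hXA i) (hAX i) (hρA i) (by rw [hρD]; ring) (hβ i).1.le (by linarith [hβB i])
      (hint i)).2
  have hB : 0 < 1 - B := sub_pos.2 hsum
  calc ∑ i, avgQuantile (μ i) (β i) (1 - B + β i)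
      = (1 - B)⁻¹ * ∑ i, ∫ t in Ioo (β i) (1 - B + β i), quantile (μ i) t := by
        rw [Finset.mul_sum]
        refine Finset.sum_congr rfl fun i _ => ?_
        rw [avgQuantile_eq_integral_Ioo _ (by linarith), add_sub_cancel_right]
    _ ≤ (1 - B)⁻¹ * ∑ i, ∫ p in D, p.1 i ∂(P.prod unitUniform) := by
        gcongr with i; exact hcmp i
    _ = C := by
        rw [sum_setIntegral_eq_of_sum_eq hsumC hint, hρD, inv_mul_cancel_left₀ hB.ne']

theorem IsJointMix.le_sum_avgQuantile (hJM : IsJointMix n μ C) (hβ : ∀ i, β i ∈ Ioo 0 1)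
    (hsum : ∑ i, β i < 1) : C ≤ ∑ i, avgQuantile (μ i) (∑ j, β j - β i) (1 - β i) := by
  obtain ⟨P, hP, hmarg, hC⟩ := hJM
  set B := ∑ j, β j
  have hX : ∀ i, Measurable fun p : (Fin n → ℝ) × ℝ => p.1 i :=
    fun i => (measurable_pi_apply i).comp measurable_fst
  have hβB : ∀ i, β i ≤ B := fun i =>
    Finset.single_le_sum (fun j _ => (hβ j).1.le) (Finset.mem_univ i)
  choose A hA hXA hAX hρA using fun i =>
    exists_upper_tail_event (hX i) (map_coord_prod_unitUniform hmarg i) (hβ i)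
  obtain ⟨D, hD, hAD, hρD⟩ := exists_disjoint_prod_unitUniform_eq (P := P) hA
    (by simpa [hρA] using hsum.le)
  simp only [hρA] at hρD
  have hkD : ∀ᵐ p ∂(P.prod unitUniform).restrict D, ∀ i, -quantile (μ i) (1 - β i) ≤ -p.1 i :=
    ae_restrict_of_forall_mem hD fun p hp i =>
      neg_le_neg (not_lt.1 fun h => (hAD i).notMem_of_mem_right hp (hXA i h))
  have hsumC := ae_sum_coord_prod_unitUniform hC
  have hint : ∀ i, IntegrableOn (fun p => p.1 i) D (P.prod unitUniform) := fun i =>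
    (integrable_of_le_of_sum_eq (f := fun i p => -p.1 i) (c := -C)
      (fun i => (hX i).neg.aestronglyMeasurable) hkD
      ((ae_restrict_of_ae hsumC).mono fun p hp => by rw [Finset.sum_neg_distrib, hp])
      i).neg.congr (.of_forall fun p => neg_neg (p.1 i))
  have hcmp : ∀ i, ∫ p in D, p.1 i ∂(P.prod unitUniform) ≤
      ∫ t in Ioo (B - β i) (1 - β i), quantile (μ i) t := fun i =>
    (setIntegral_le_integral_quantile (hX i) (map_coord_prod_unitUniform hmarg i) (hA i) hD
      (hAD i) (hXA i) (hAX i) (by rw [hρA i]; ring) (by rw [hρD]; ring)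
      (sub_nonneg.2 (hβB i)) (by linarith [(hβ i).1]) (hint i)).2
  have hB : 0 < 1 - B := sub_pos.2 hsum
  calc C = (1 - B)⁻¹ * ∑ i, ∫ p in D, p.1 i ∂(P.prod unitUniform) := by
        rw [sum_setIntegral_eq_of_sum_eq hsumC hint, hρD, inv_mul_cancel_left₀ hB.ne']
    _ ≤ (1 - B)⁻¹ * ∑ i, ∫ t in Ioo (B - β i) (1 - β i), quantile (μ i) t := by
        gcongr with i; exact hcmp i
    _ = ∑ i, avgQuantile (μ i) (B - β i) (1 - β i) := by
        rw [Finset.mul_sum]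
        refine Finset.sum_congr rfl fun i _ => ?_
        rw [avgQuantile_eq_integral_Ioo _ (by linarith), sub_sub_sub_cancel_right]

end JointMix

theorem stmt9 (n : ℕ) (μ : Fin n → Measure ℝ) (hprob : ∀ i, IsProbabilityMeasure (μ i))
    (C : ℝ) (hJM : IsJointMix n μ C) (β : Fin n → ℝ)
    (hβ : ∀ i, β i ∈ Set.Ioo (0 : ℝ) 1) (hsum : ∑ i, β i < 1) :
    ∑ i, avgQuantile (μ i) (β i) (1 - (∑ j, β j) + β i) ≤ C ∧
    C ≤ ∑ i, avgQuantile (μ i) ((∑ j, β j) - β i) (1 - β i) :=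
  ⟨hJM.sum_avgQuantile_le hβ hsum, hJM.le_sum_avgQuantile hβ hsum⟩
end

section
/- Let μ₁,…,μₙ be Borel probability measures on ℝ whose means m₁,…,mₙ exist in (−∞, ∞] (i.e., the negative part of the identity function is integrable with respect to each μᵢ), and suppose mᵢ = ∞ for at least one i. Then (μ₁,…,μₙ) is not jointly mixable. In particular, a Borel probability measure on ℝ whose mean exists and equals +∞ (or −∞) is not n-completely mixable for any n ∈ ℕ. -/
/-!
Under a joint mix `P` the coordinates `X₁, …, Xₙ` sum to the constant `C` almost surely, so
`Xⱼ = C - ∑_{i ≠ j} Xᵢ ≤ C - ∑_{i ≠ j} min Xᵢ 0`. When every negative part is integrable, `Xⱼ` is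
thus squeezed between the integrable functions `min Xⱼ 0` and `C - ∑_{i ≠ j} min Xᵢ 0`, so every
marginal has a finite mean. The case of integrable positive parts follows by the reflection
`x ↦ -x`, which maps joint mixes to joint mixes.
-/

open MeasureTheory ENNReal

theorem integrable_of_integrable_min_of_sum_ae_eq {Ω ι : Type*} [MeasurableSpace Ω]
    {P : Measure Ω} [IsFiniteMeasure P] [Fintype ι] {X : ι → Ω → ℝ} {C : ℝ}
    (hmin : ∀ i, Integrable (fun ω => min (X i ω) 0) P) (hsum : ∀ᵐ ω ∂P, ∑ i, X i ω = C)
    (j : ι) (hXj : AEStronglyMeasurable (X j) P) : Integrable (X j) P := by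
  classical
  refine integrable_of_le_of_le hXj (.of_forall fun ω => min_le_left _ 0) ?_ (hmin j)
    ((integrable_const C).sub (integrable_finsetSum (Finset.univ.erase j) fun i _ => hmin i))
  filter_upwards [hsum] with ω hω
  have hsplit : X j ω + ∑ i ∈ Finset.univ.erase j, X i ω = C := by
    rw [Finset.add_sum_erase Finset.univ (fun i => X i ω) (Finset.mem_univ j), hω]
  have hle : ∑ i ∈ Finset.univ.erase j, min (X i ω) 0 ≤ ∑ i ∈ Finset.univ.erase j, X i ω :=
    Finset.sum_le_sum fun i _ => min_le_left _ _
  simp only [Pi.sub_apply]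
  linarith

theorem integrable_map_neg_iff {ν : Measure ℝ} {f : ℝ → ℝ} :
    Integrable f (ν.map Neg.neg) ↔ Integrable (fun x => f (-x)) ν :=
  integrable_map_equiv (MeasurableEquiv.neg ℝ) f

theorem IsJointMix.neg {n : ℕ} {μ : Fin n → Measure ℝ} {C : ℝ} (h : IsJointMix n μ C) :
    IsJointMix n (fun i => (μ i).map Neg.neg) (-C) := by
  obtain ⟨P, hP, hmarg, hsum⟩ := h
  have hneg : Measurable (Neg.neg : (Fin n → ℝ) → (Fin n → ℝ)) := measurable_neg
  refine ⟨P.map Neg.neg, Measure.isProbabilityMeasure_map hneg.aemeasurable, fun i => ?_, ?_⟩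
  · change _ = (μ i).map Neg.neg
    rw [Measure.map_map (measurable_pi_apply i) hneg, ← hmarg i]
    exact (Measure.map_map measurable_neg (measurable_pi_apply i)).symm
  · rw [Measure.map_apply hneg (measurableSet_eq_fun (by fun_prop) measurable_const)]
    convert hsum using 2
    ext x
    simp [Finset.sum_neg_distrib]

theorem not_isJointMix_of_integrable_min {n : ℕ} {μ : Fin n → Measure ℝ}
    (hmin : ∀ i, Integrable (fun x : ℝ => min x 0) (μ i))
    (hinf : ∃ i, ¬ Integrable (fun x : ℝ => x) (μ i)) (C : ℝ) : ¬ IsJointMix n μ C := by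
  rintro ⟨P, hP, hmarg, hsum⟩
  obtain ⟨j, hj⟩ := hinf
  have hmarg_integrable {f : ℝ → ℝ} (hf : Measurable f) (i : Fin n) :
      Integrable f (μ i) ↔ Integrable (fun x : Fin n → ℝ => f (x i)) P := by
    rw [← hmarg i]
    exact integrable_map_measure hf.aestronglyMeasurable (measurable_pi_apply i).aemeasurable
  refine hj ((hmarg_integrable measurable_id j).2 ?_)
  have hsum_ae : ∀ᵐ x ∂P, ∑ i, x i = C :=
    (ae_iff_prob_eq_one (measurableSet_setOfPred.1
      (measurableSet_eq_fun (by fun_prop) measurable_const))).2 hsum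
  exact integrable_of_integrable_min_of_sum_ae_eq (X := fun i (x : Fin n → ℝ) => x i)
    (fun i => (hmarg_integrable (by fun_prop) i).1 (hmin i)) hsum_ae
    j (measurable_pi_apply j).aestronglyMeasurable

theorem not_isJointMix_of_integrable_max {n : ℕ} {μ : Fin n → Measure ℝ}
    (hmax : ∀ i, Integrable (fun x : ℝ => max x 0) (μ i))
    (hinf : ∃ i, ¬ Integrable (fun x : ℝ => x) (μ i)) (C : ℝ) : ¬ IsJointMix n μ C := by
  refine fun h => not_isJointMix_of_integrable_min (fun i => ?_) ?_ (-C) h.neg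
  · rw [integrable_map_neg_iff]
    have hreflect : (fun x : ℝ => min (-x) 0) = fun x => -max x 0 :=
      funext fun x => by rw [← min_neg_neg, neg_zero]
    exact hreflect ▸ (hmax i).neg
  · obtain ⟨j, hj⟩ := hinf
    refine ⟨j, fun h => hj ?_⟩
    simpa only [neg_neg] using (integrable_map_neg_iff.1 h).fun_neg

theorem stmt12_general (n : ℕ) (μ : Fin n → Measure ℝ)
    (hneg : ∀ i, Integrable (fun x : ℝ => min x 0) (μ i))
    (hinf : ∃ i, ¬ Integrable (fun x : ℝ => x) (μ i)) :
    (∀ C : ℝ, ¬ IsJointMix n μ C) ∧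
    ∀ (ν : Measure ℝ), IsProbabilityMeasure ν → ∀ m : ℕ, 1 ≤ m →
      (Integrable (fun x : ℝ => min x 0) ν ∨ Integrable (fun x : ℝ => max x 0) ν) →
      ¬ Integrable (fun x : ℝ => x) ν →
      ∀ c : ℝ, ¬ IsCompletelyMixable m ν c := by
  refine ⟨not_isJointMix_of_integrable_min hneg hinf, fun ν _ m hm hmean hid c => ?_⟩
  have hinf' : ∃ _ : Fin m, ¬ Integrable (fun x : ℝ => x) ν := ⟨⟨0, hm⟩, hid⟩
  rcases hmean with hmin | hmax
  · exact not_isJointMix_of_integrable_min (fun _ => hmin) hinf' _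
  · exact not_isJointMix_of_integrable_max (fun _ => hmax) hinf' _

theorem stmt12 (n : ℕ) (μ : Fin n → Measure ℝ) (hprob : ∀ i, IsProbabilityMeasure (μ i))
    (hneg : ∀ i, Integrable (fun x : ℝ => min x 0) (μ i))
    (hinf : ∃ i, ¬ Integrable (fun x : ℝ => x) (μ i)) :
    (∀ C : ℝ, ¬ IsJointMix n μ C) ∧
    ∀ (ν : Measure ℝ), IsProbabilityMeasure ν → ∀ m : ℕ, 1 ≤ m →
      (Integrable (fun x : ℝ => min x 0) ν ∨ Integrable (fun x : ℝ => max x 0) ν) →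
      ¬ Integrable (fun x : ℝ => x) ν →
      ∀ c : ℝ, ¬ IsCompletelyMixable m ν c :=
  stmt12_general n μ hneg hinf
end

section
/- Let μ be a Borel probability measure on ℝ and n ≥ 2. If c ∈ ℝ is an n-center of μ, then for every t < c one has ∫_t^{nc−(n−1)t} μ((x, ∞)) dx ≥ c − t. -/
open MeasureTheory ENNReal

def cappedExcess (t s y : ℝ) : ℝ := min (max (y - t) 0) (s - t)

section cappedExcess

variable {t s : ℝ}

lemma cappedExcess_nonneg (hts : t ≤ s) (y : ℝ) : 0 ≤ cappedExcess t s y :=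
  le_min (le_max_right _ _) (sub_nonneg.mpr hts)

lemma cappedExcess_le (y : ℝ) : cappedExcess t s y ≤ s - t := min_le_right _ _

lemma continuous_cappedExcess : Continuous (cappedExcess t s) := by
  unfold cappedExcess; fun_prop

lemma sub_le_cappedExcess {y : ℝ} (hy : y ≤ s) : y - t ≤ cappedExcess t s y :=
  le_min (le_max_left _ _) (by linarith)

lemma cappedExcess_of_le {y : ℝ} (hy : s ≤ y) : cappedExcess t s y = s - t :=
  min_eq_right (le_max_of_le_left (by linarith))

lemma lt_cappedExcess_iff {r y : ℝ} (hr : 0 < r) (hrs : r < s - t) :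
    r < cappedExcess t s y ↔ t + r < y := by
  simp only [cappedExcess, lt_min_iff, lt_max_iff, hrs, and_true]
  constructor
  · rintro (h | h) <;> linarith
  · intro h; left; linarith

/-- Either one of the excesses reaches the cap `s - t`, or none is capped. -/
lemma sub_le_sum_cappedExcess {ι : Type*} (F : Finset ι) (x : ι → ℝ) (hts : t ≤ s)
    (hx : s - t ≤ ∑ i ∈ F, (x i - t)) : s - t ≤ ∑ i ∈ F, cappedExcess t s (x i) := by
  by_cases hcap : ∃ i ∈ F, s ≤ x i
  · obtain ⟨i, hi, hsx⟩ := hcap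
    calc s - t = cappedExcess t s (x i) := (cappedExcess_of_le hsx).symm
      _ ≤ ∑ j ∈ F, cappedExcess t s (x j) :=
        Finset.single_le_sum (fun j _ => cappedExcess_nonneg hts (x j)) hi
  · push Not at hcap
    exact hx.trans (Finset.sum_le_sum fun i hi => sub_le_cappedExcess (hcap i hi).le)

lemma integrable_cappedExcess (μ : Measure ℝ) [IsFiniteMeasure μ] (hts : t ≤ s) :
    Integrable (cappedExcess t s) μ :=
  .of_bound continuous_cappedExcess.aestronglyMeasurable (s - t) <| .of_forall fun y => by
    rw [Real.norm_of_nonneg (cappedExcess_nonneg hts y)]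
    exact cappedExcess_le y

/-- Layer-cake formula for the capped excess. -/
lemma integral_cappedExcess (μ : Measure ℝ) [IsFiniteMeasure μ] (hts : t ≤ s) :
    ∫ y, cappedExcess t s y ∂μ = ∫ x in t..s, (μ (Set.Ioi x)).toReal := by
  have hlevel : ∀ r ∈ Set.Ioi (0 : ℝ), μ.real {y | r < cappedExcess t s y}
      = (Set.Ioo 0 (s - t)).indicator (fun r => μ.real (Set.Ioi (t + r))) r := by
    intro r hr
    by_cases hrs : r < s - t
    · rw [Set.indicator_of_mem (show r ∈ Set.Ioo 0 (s - t) from ⟨hr, hrs⟩)]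
      congr 1; ext y; exact lt_cappedExcess_iff hr hrs
    · rw [Set.indicator_of_notMem fun h => hrs h.2]
      have hempty : ∀ y, ¬ r < cappedExcess t s y := fun y =>
        not_lt.mpr ((cappedExcess_le y).trans (not_lt.mp hrs))
      simp [hempty]
  rw [(integrable_cappedExcess μ hts).integral_eq_integral_meas_lt
      (.of_forall (cappedExcess_nonneg hts)),
    setIntegral_congr_fun measurableSet_Ioi hlevel, setIntegral_indicator measurableSet_Ioo,
    Set.inter_eq_right.mpr Set.Ioo_subset_Ioi_self, ← integral_Ioc_eq_integral_Ioo,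
    ← intervalIntegral.integral_of_le (sub_nonneg.mpr hts),
    intervalIntegral.integral_comp_add_left (fun x => μ.real (Set.Ioi x))]
  simp [measureReal_def]

end cappedExcess

lemma IsJointMix.le_sum_integral {n : ℕ} {μ : Fin n → Measure ℝ} {C m : ℝ}
    (h : IsJointMix n μ C) {g : Fin n → ℝ → ℝ} (hg : ∀ i, Integrable (g i) (μ i))
    (hm : ∀ x : Fin n → ℝ, ∑ i, x i = C → m ≤ ∑ i, g i (x i)) :
    m ≤ ∑ i, ∫ y, g i y ∂μ i := by
  obtain ⟨P, hP, hmarg, hsum⟩ := h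
  have hgP : ∀ i, Integrable (fun x : Fin n → ℝ => g i (x i)) P := fun i =>
    (hmarg i ▸ hg i).comp_measurable (measurable_pi_apply i)
  have hae : ∀ᵐ x ∂P, ∑ i, x i = C := by
    have hmeas : MeasurableSet {x : Fin n → ℝ | ∑ i, x i = C} :=
      measurableSet_eq_fun (Finset.measurable_sum _ fun i _ => measurable_pi_apply i)
        measurable_const
    rwa [ae_iff, ← Set.compl_ofPred, prob_compl_eq_zero_iff hmeas]
  calc m = ∫ _, m ∂P := by simp
    _ ≤ ∫ x, ∑ i, g i (x i) ∂P :=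
      integral_mono_ae (integrable_const m) (integrable_finsetSum _ fun i _ => hgP i)
        (hae.mono fun x hx => hm x hx)
    _ = ∑ i, ∫ x, g i (x i) ∂P := integral_finsetSum _ fun i _ => hgP i
    _ = ∑ i, ∫ y, g i y ∂μ i := by
      refine Finset.sum_congr rfl fun i _ => ?_
      rw [← hmarg i, integral_map (measurable_pi_apply i).aemeasurable
        (hmarg i ▸ hg i).aestronglyMeasurable]

theorem stmt15 (n : ℕ) (hn : 2 ≤ n) (μ : Measure ℝ) [IsProbabilityMeasure μ]
    (c : ℝ) (h : IsCompletelyMixable n μ c) (t : ℝ) (ht : t < c) :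
    c - t ≤ ∫ x in t..(n * c - ((n : ℝ) - 1) * t), (μ (Set.Ioi x)).toReal := by
  set s := n * c - ((n : ℝ) - 1) * t
  have hn0 : (0 : ℝ) < n := by exact_mod_cast (by omega : 0 < n)
  have hst : s - t = n * (c - t) := by ring
  have hts : t ≤ s := by nlinarith
  have hmix : s - t ≤ ∑ _i : Fin n, ∫ y, cappedExcess t s y ∂μ :=
    h.le_sum_integral (fun _ => integrable_cappedExcess μ hts) fun x hx =>
      sub_le_sum_cappedExcess _ x hts <| by
        simp only [Finset.sum_sub_distrib, hx, Finset.sum_const, Finset.card_univ,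
          Fintype.card_fin, nsmul_eq_mul]
        linarith
  rw [Finset.sum_const, Finset.card_univ, Fintype.card_fin, nsmul_eq_mul, hst,
    integral_cappedExcess μ hts] at hmix
  exact le_of_mul_le_mul_left hmix hn0
end
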